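/- arXiv:2412.13633 — 7 statements merged into one kernel-verified Lean document; each statement's English description precedes it below -/
import Mathlib

section
/- For a symmetric trace-free operator T on an m-dimensional inner product space, |tr(T^3)| ≤ ((m-2)/√(m(m-1)))·|T|^3, with equality only if either all eigenvalues vanish or (up to permutation and sign) λ_1=...=λ_{m-1} = -|T|/√(m(m-1)) and λ_m = √((m-1)/m)·|T|. -/
/-!
Let `n = card ι`, `Q = ∑ xᵢ²` and choose `a ≥ 0` with `n (n - 1) a² = Q`. When `∑ xᵢ = 0`,
`∑ (xᵢ + a)² (xᵢ - (n - 1) a) = ∑ xᵢ³ - (n - 2) a Q`, and Cauchy–Schwarz applied to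
`-xᵢ = ∑_{j ≠ i} xⱼ` gives `xᵢ ≤ (n - 1) a`, so every summand on the left is nonpositive.
Equality forces each `xᵢ ∈ {-a, (n - 1) a}`, and `∑ xᵢ = 0` leaves exactly one entry equal to
`(n - 1) a`. Applying this to `-x` handles the absolute value.
-/

theorem Real.sqrt_sub_one_div_self {n : ℝ} (hn : 1 < n) :
    √((n - 1) / n) = (n - 1) / √(n * (n - 1)) := by
  have hpos : 0 < n * (n - 1) := by nlinarith
  rw [eq_div_iff (Real.sqrt_pos.mpr hpos).ne', ← Real.sqrt_mul (by positivity),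
    show (n - 1) / n * (n * (n - 1)) = (n - 1) ^ 2 by field_simp, Real.sqrt_sq (by linarith)]

open Finset

section
variable {ι : Type*} [Fintype ι] {x : ι → ℝ} {a : ℝ}

theorem eq_zero_of_sum_eq_zero_of_card_le_one (hι : Fintype.card ι ≤ 1) (hx : ∑ i, x i = 0)
    (i : ι) : x i = 0 := by
  have := Fintype.card_le_one_iff_subsingleton.mp hι
  rwa [Fintype.sum_subsingleton _ i] at hx

theorem card_mul_sq_le_of_sum_eq_zero (hx : ∑ i, x i = 0) (i : ι) :
    (Fintype.card ι : ℝ) * x i ^ 2 ≤ (Fintype.card ι - 1) * ∑ j, x j ^ 2 := by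
  classical
  have hcs : (∑ j ∈ univ.erase i, x j) ^ 2 ≤ #(univ.erase i) * ∑ j ∈ univ.erase i, x j ^ 2 :=
    sq_sum_le_card_mul_sum_sq
  have hcard : (#(univ.erase i) : ℝ) = Fintype.card ι - 1 := by
    rw [card_erase_of_mem (mem_univ i), card_univ,
      Nat.cast_sub (Fintype.card_pos_iff.mpr ⟨i⟩), Nat.cast_one]
  rw [sum_erase_eq_sub (mem_univ i), sum_erase_eq_sub (mem_univ i), hx, hcard] at hcs
  linear_combination hcs

theorem le_card_sub_one_mul_of_sum_eq_zero (hx : ∑ i, x i = 0) (ha : 0 ≤ a)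
    (hQ : (Fintype.card ι : ℝ) * (Fintype.card ι - 1) * a ^ 2 = ∑ i, x i ^ 2) (i : ι) :
    x i ≤ (Fintype.card ι - 1) * a := by
  have hn : (1 : ℝ) ≤ Fintype.card ι := by exact_mod_cast Fintype.card_pos_iff.mpr ⟨i⟩
  have hsq : x i ^ 2 ≤ ((Fintype.card ι - 1) * a) ^ 2 := by
    refine le_of_mul_le_mul_left ?_ (by linarith : (0 : ℝ) < Fintype.card ι)
    linear_combination card_mul_sq_le_of_sum_eq_zero hx i - (Fintype.card ι - 1) * hQ
  exact le_of_abs_le (abs_le_of_sq_le_sq hsq (mul_nonneg (by linarith) ha))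

theorem sum_sq_add_mul_sub_eq (hx : ∑ i, x i = 0)
    (hQ : (Fintype.card ι : ℝ) * (Fintype.card ι - 1) * a ^ 2 = ∑ i, x i ^ 2) :
    ∑ i, (x i + a) ^ 2 * (x i - (Fintype.card ι - 1) * a) =
      ∑ i, x i ^ 3 - (Fintype.card ι - 2) * a * ∑ i, x i ^ 2 := by
  have hexpand : ∀ i, (x i + a) ^ 2 * (x i - (Fintype.card ι - 1) * a) =
      x i ^ 3 + (3 - Fintype.card ι) * a * x i ^ 2 + (3 - 2 * Fintype.card ι) * a ^ 2 * x i
        - (Fintype.card ι - 1) * a ^ 3 := fun i => by ring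
  simp only [hexpand, sum_add_distrib, sum_sub_distrib, ← mul_sum, hx, sum_const, card_univ,
    nsmul_eq_mul]
  linear_combination (-a) * hQ

theorem sum_sq_add_mul_sub_nonpos (hx : ∑ i, x i = 0) (ha : 0 ≤ a)
    (hQ : (Fintype.card ι : ℝ) * (Fintype.card ι - 1) * a ^ 2 = ∑ i, x i ^ 2) (i : ι) :
    (x i + a) ^ 2 * (x i - (Fintype.card ι - 1) * a) ≤ 0 :=
  mul_nonpos_of_nonneg_of_nonpos (sq_nonneg _)
    (sub_nonpos.mpr (le_card_sub_one_mul_of_sum_eq_zero hx ha hQ i))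

theorem sum_cube_le_of_sum_eq_zero (hx : ∑ i, x i = 0) (ha : 0 ≤ a)
    (hQ : (Fintype.card ι : ℝ) * (Fintype.card ι - 1) * a ^ 2 = ∑ i, x i ^ 2) :
    ∑ i, x i ^ 3 ≤ (Fintype.card ι - 2) * a * ∑ i, x i ^ 2 := by
  have := sum_nonpos fun i (_ : i ∈ univ) => sum_sq_add_mul_sub_nonpos hx ha hQ i
  rw [sum_sq_add_mul_sub_eq hx hQ] at this
  linarith

theorem eq_neg_or_eq_of_sum_cube_eq (hx : ∑ i, x i = 0) (ha : 0 ≤ a)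
    (hQ : (Fintype.card ι : ℝ) * (Fintype.card ι - 1) * a ^ 2 = ∑ i, x i ^ 2)
    (heq : ∑ i, x i ^ 3 = (Fintype.card ι - 2) * a * ∑ i, x i ^ 2) (i : ι) :
    x i = -a ∨ x i = (Fintype.card ι - 1) * a := by
  have hzero := (sum_eq_zero_iff_of_nonpos fun i (_ : i ∈ univ) =>
    sum_sq_add_mul_sub_nonpos hx ha hQ i).mp
      (by rw [sum_sq_add_mul_sub_eq hx hQ, heq, sub_self]) i (mem_univ i)
  rcases mul_eq_zero.mp hzero with h | h
  · exact Or.inl (eq_neg_of_add_eq_zero_left (pow_eq_zero_iff two_ne_zero |>.mp h))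
  · exact Or.inr (sub_eq_zero.mp h)

theorem exists_eq_of_sum_cube_eq [Nonempty ι] (hx : ∑ i, x i = 0) (ha : 0 < a)
    (hQ : (Fintype.card ι : ℝ) * (Fintype.card ι - 1) * a ^ 2 = ∑ i, x i ^ 2)
    (heq : ∑ i, x i ^ 3 = (Fintype.card ι - 2) * a * ∑ i, x i ^ 2) :
    ∃ i₀, (∀ i ≠ i₀, x i = -a) ∧ x i₀ = (Fintype.card ι - 1) * a := by
  classical
  have hroot := eq_neg_or_eq_of_sum_cube_eq hx ha.le hQ heq
  set A := univ.filter fun i => x i = (Fintype.card ι - 1) * a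
  have hsplit : ∀ i,
      x i = -a + Fintype.card ι * a * if x i = (Fintype.card ι - 1) * a then 1 else 0 := by
    intro i
    split_ifs with h
    · rw [h]; ring
    · rw [(hroot i).resolve_right h]; ring
  have hA : #A = 1 := by
    rw [sum_congr rfl fun i _ => hsplit i, sum_add_distrib, ← mul_sum, sum_boole, sum_const,
      card_univ, nsmul_eq_mul] at hx
    have hn : (0 : ℝ) < Fintype.card ι := by exact_mod_cast Fintype.card_pos
    have : (Fintype.card ι : ℝ) * a * #A = Fintype.card ι * a * 1 := by linear_combination hx
    exact_mod_cast mul_left_cancel₀ (mul_pos hn ha).ne' this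
  obtain ⟨i₀, hi₀⟩ := card_eq_one.mp hA
  refine ⟨i₀, fun i hi => (hroot i).resolve_right fun h => hi ?_, ?_⟩
  · simpa [A, hi₀] using (mem_filter.mpr ⟨mem_univ i, h⟩ : i ∈ A)
  · exact (mem_filter.mp (hi₀ ▸ mem_singleton_self i₀ : i₀ ∈ A)).2

theorem abs_sum_cube_le_of_sum_eq_zero (hx : ∑ i, x i = 0) (ha : 0 ≤ a)
    (hQ : (Fintype.card ι : ℝ) * (Fintype.card ι - 1) * a ^ 2 = ∑ i, x i ^ 2) :
    |∑ i, x i ^ 3| ≤ (Fintype.card ι - 2) * a * ∑ i, x i ^ 2 := by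
  have hneg := sum_cube_le_of_sum_eq_zero (x := fun i => -x i) (by simp [hx]) ha (by simpa using hQ)
  simp only [Odd.neg_pow (by decide : Odd 3), neg_sq, sum_neg_distrib] at hneg
  exact abs_le.mpr ⟨by linarith, sum_cube_le_of_sum_eq_zero hx ha hQ⟩

theorem exists_sign_of_abs_sum_cube_eq [Nonempty ι] (hx : ∑ i, x i = 0) (ha : 0 < a)
    (hQ : (Fintype.card ι : ℝ) * (Fintype.card ι - 1) * a ^ 2 = ∑ i, x i ^ 2)
    (heq : |∑ i, x i ^ 3| = (Fintype.card ι - 2) * a * ∑ i, x i ^ 2) :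
    ∃ ε : ℝ, (ε = 1 ∨ ε = -1) ∧
      ∃ i₀, (∀ i ≠ i₀, ε * x i = -a) ∧ ε * x i₀ = (Fintype.card ι - 1) * a := by
  rcases (abs_eq (heq ▸ abs_nonneg _)).mp heq with h | h
  · obtain ⟨i₀, hi, hi₀⟩ := exists_eq_of_sum_cube_eq hx ha hQ h
    exact ⟨1, Or.inl rfl, i₀, by simpa using hi, by simpa using hi₀⟩
  · obtain ⟨i₀, hi, hi₀⟩ := exists_eq_of_sum_cube_eq (x := fun i => -x i) (by simp [hx]) ha
      (by simpa using hQ)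
      (by simp only [Odd.neg_pow (by decide : Odd 3), neg_sq, sum_neg_distrib]; linarith)
    exact ⟨-1, Or.inr rfl, i₀, by simpa using hi, by simpa using hi₀⟩
end

/-- For a symmetric trace-free operator `T` on an `m`-dimensional inner product space,
`|tr T³| ≤ ((m-2)/√(m(m-1))) |T|³`, with equality only if either all eigenvalues
vanish or, up to permutation and sign, `λ₁ = ⋯ = λ_{m-1} = -|T|/√(m(m-1))` and
`λ_m = √((m-1)/m)·|T|`. -/
theorem stmt1 (m : ℕ) (T : Matrix (Fin m) (Fin m) ℝ) (hT : T.IsHermitian)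
    (htr : T.trace = 0) :
    |∑ i, (hT.eigenvalues i) ^ 3| ≤
      (((m : ℝ) - 2) / Real.sqrt ((m : ℝ) * ((m : ℝ) - 1))) *
        (Real.sqrt (∑ i, (hT.eigenvalues i) ^ 2)) ^ 3 ∧
    (|∑ i, (hT.eigenvalues i) ^ 3| =
        (((m : ℝ) - 2) / Real.sqrt ((m : ℝ) * ((m : ℝ) - 1))) *
          (Real.sqrt (∑ i, (hT.eigenvalues i) ^ 2)) ^ 3 →
      (∀ i, hT.eigenvalues i = 0) ∨
      ∃ ε : ℝ, (ε = 1 ∨ ε = -1) ∧ ∃ σ : Equiv.Perm (Fin m), ∃ i₀ : Fin m,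
        (∀ i, i ≠ i₀ → ε * hT.eigenvalues (σ i) =
          -(1 / Real.sqrt ((m : ℝ) * ((m : ℝ) - 1))) *
            Real.sqrt (∑ j, (hT.eigenvalues j) ^ 2)) ∧
        ε * hT.eigenvalues (σ i₀) =
          Real.sqrt (((m : ℝ) - 1) / m) * Real.sqrt (∑ j, (hT.eigenvalues j) ^ 2)) := by
  set x := hT.eigenvalues
  have hx : ∑ i, x i = 0 := by simpa [hT.trace_eq_sum_eigenvalues] using htr
  rcases lt_or_ge m 2 with hm | hm
  · have hx0 := eq_zero_of_sum_eq_zero_of_card_le_one (by simpa [Nat.lt_succ_iff] using hm) hx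
    simp [hx0]
  have hm' : (1 : ℝ) < m := by exact_mod_cast hm
  have hc : 0 < (m : ℝ) * (m - 1) := by nlinarith
  set Q := ∑ i, x i ^ 2
  have hQ0 : 0 ≤ Q := sum_nonneg fun i _ => sq_nonneg (x i)
  set a := √Q / √((m : ℝ) * (m - 1))
  have hQ : (Fintype.card (Fin m) : ℝ) * (Fintype.card (Fin m) - 1) * a ^ 2 = Q := by
    rw [Fintype.card_fin, div_pow, Real.sq_sqrt hQ0, Real.sq_sqrt hc.le, mul_div_cancel₀ _ hc.ne']
  have hbound : ((m : ℝ) - 2) / √((m : ℝ) * (m - 1)) * √Q ^ 3 = (m - 2) * a * Q := by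
    rw [pow_succ, Real.sq_sqrt hQ0]; ring
  rw [hbound]
  refine ⟨by simpa using abs_sum_cube_le_of_sum_eq_zero hx (by positivity) hQ, fun heq => ?_⟩
  by_cases hQ_zero : Q = 0
  · exact Or.inl fun i => pow_eq_zero_iff two_ne_zero |>.mp
      ((sum_eq_zero_iff_of_nonneg fun i _ => sq_nonneg (x i)).mp hQ_zero i (mem_univ i))
  have : Nonempty (Fin m) := ⟨⟨0, by omega⟩⟩
  have ha : 0 < a := div_pos (Real.sqrt_pos.mpr (hQ0.lt_of_ne' hQ_zero)) (Real.sqrt_pos.mpr hc)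
  obtain ⟨ε, hε, i₀, hi, hi₀⟩ :=
    exists_sign_of_abs_sum_cube_eq hx ha hQ (by simpa using heq)
  refine Or.inr ⟨ε, hε, Equiv.refl _, i₀, fun i hne => (hi i hne).trans (by ring), ?_⟩
  rw [Fintype.card_fin] at hi₀
  rw [Real.sqrt_sub_one_div_self hm']
  exact hi₀.trans (by ring)
end

section
/- For algebraic curvature operators: (1) Q(R,S) lies in ⟨I⟩ if R,S ∈ ⟨I⟩; (2) Q(R,S) lies in ⟨Ric₀⟩ if R ∈ ⟨I⟩ and S ∈ ⟨Ric₀⟩; (3) Q(R,S)=0 if R ∈ ⟨I⟩ and S ∈ ⟨W⟩; (4) Q(R,S) ∈ ⟨W⟩ if R,S ∈ ⟨W⟩; (5) Q(R,S) ∈ ⟨Ric₀⟩ if R ∈ ⟨Ric₀⟩ and S ∈ ⟨W⟩. -/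
/-!
Expanding `R²` with the first Bianchi identity, `R_ijpq = R_ipjq - R_jpiq`, turns Hamilton's
`Q(R) = R² + R♯` into a fixed linear expression `qLin` in the single contraction
`B_abcd = ∑ R_apcq R_bpdq`, and the curvature-operator identities for `Q(R)` follow from the two
symmetries `B_abcd = B_badc = B_cdab` alone. Contracting once more gives `Ric(Q(R)) = R̊(Ric R)`,
so by polarization `Q(R,S)` is Weyl when `R` and `S` are. For `R = T ∧ id` a direct computation
gives `Q(T ∧ id, X) = (½ X̊T) ∧ id + ½ T ∧ Ric X`; for `T` a multiple of the identity this is a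
multiple of `Ric(X) ∧ id`, and the remaining cases read off which piece `Ric X` and `X̊T` lie in.
-/

open scoped BigOperators

namespace PaperStmt

noncomputable section Work

variable {N : Type*} [Fintype N] [DecidableEq N]

/-- Kronecker delta. -/
def kd (i j : N) : ℝ := if i = j then 1 else 0

/-- Algebraic curvature operator: antisymmetry in first and last pairs,
pair-interchange symmetry, and the first Bianchi identity. -/
def IsCurvOp (R : N → N → N → N → ℝ) : Prop :=
  (∀ i j k l, R j i k l = - R i j k l) ∧
  (∀ i j k l, R i j l k = - R i j k l) ∧
  (∀ i j k l, R k l i j = R i j k l) ∧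
  (∀ i j k l, R i j k l + R j k i l + R k i j l = 0)

/-- Ricci tensor. -/
def ric (R : N → N → N → N → ℝ) (i j : N) : ℝ := ∑ k, R i k j k

/-- Scalar curvature. -/
def scal (R : N → N → N → N → ℝ) : ℝ := ∑ i, ric R i i

/-- Inner product of symmetric 2-tensors. -/
def inner2 (A B : N → N → ℝ) : ℝ := ∑ i, ∑ j, A i j * B i j

def norm2sq (A : N → N → ℝ) : ℝ := inner2 A A

/-- Inner product of curvature operators: (1/4) Σ X_{ijkl} Y_{ijkl}. -/
def inner4 (X Y : N → N → N → N → ℝ) : ℝ :=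
  (1/4) * ∑ i, ∑ j, ∑ k, ∑ l, X i j k l * Y i j k l

def norm4sq (X : N → N → N → N → ℝ) : ℝ := inner4 X X

/-- Wedge (Kulkarni–Nomizu type) product of symmetric endomorphisms. -/
def wedge (A B : N → N → ℝ) (i j k l : N) : ℝ :=
  (1/2) * (A i k * B j l + B i k * A j l - A i l * B j k - A j k * B i l)

/-- Normalized scalar curvature λ̄ = scal/n. -/
def lam (n : ℕ) (R : N → N → N → N → ℝ) : ℝ := scal R / n

/-- Traceless Ricci tensor. -/
def ric0 (n : ℕ) (R : N → N → N → N → ℝ) (i j : N) : ℝ :=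
  ric R i j - lam n R * kd i j

/-- Scalar-curvature part R_I = (λ̄/(n-1)) id∧id. -/
def RI (n : ℕ) (R : N → N → N → N → ℝ) (i j k l : N) : ℝ :=
  (lam n R / ((n : ℝ) - 1)) * wedge kd kd i j k l

/-- Traceless-Ricci part R_{Ric₀} = (2/(n-2)) Ric₀ ∧ id. -/
def RRic0 (n : ℕ) (R : N → N → N → N → ℝ) (i j k l : N) : ℝ :=
  (2 / ((n : ℝ) - 2)) * wedge (ric0 n R) kd i j k l

/-- Weyl part W = R - R_I - R_{Ric₀}. -/
def weyl (n : ℕ) (R : N → N → N → N → ℝ) (i j k l : N) : ℝ :=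
  R i j k l - RI n R i j k l - RRic0 n R i j k l

/-- Square of a curvature operator. -/
def csq (R : N → N → N → N → ℝ) (i j k l : N) : ℝ :=
  (1/2) * ∑ p, ∑ q, R i j p q * R k l p q

/-- Hamilton's sharp operation R♯. -/
def sharp (R : N → N → N → N → ℝ) (i j k l : N) : ℝ :=
  ∑ p, ∑ q, (R i p k q * R j p l q - R i p l q * R j p k q)

/-- Hamilton's quadratic term Q(R) = R² + R♯. -/
def Q (R : N → N → N → N → ℝ) (i j k l : N) : ℝ := csq R i j k l + sharp R i j k l

/-- Square of a symmetric 2-tensor. -/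
def matsq (A : N → N → ℝ) (i j : N) : ℝ := ∑ k, A i k * A k j

/-- Traceless part of a symmetric 2-tensor. -/
def tless (n : ℕ) (A : N → N → ℝ) (i j : N) : ℝ :=
  A i j - ((∑ k, A k k) / n) * kd i j

/-- The scalar-curvature line ⟨I⟩. -/
def spanI (n : ℕ) : Set (Fin n → Fin n → Fin n → Fin n → ℝ) :=
  {R | ∃ c : ℝ, ∀ i j k l, R i j k l = c * wedge kd kd i j k l}

/-- The traceless-Ricci part ⟨Ric₀⟩: operators of the form `T ∧ id` with `T`
symmetric and trace-free. -/
def spanRic0 (n : ℕ) : Set (Fin n → Fin n → Fin n → Fin n → ℝ) :=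
  {R | ∃ T : Fin n → Fin n → ℝ, (∀ i j, T i j = T j i) ∧ (∑ i, T i i = 0) ∧
    ∀ i j k l, R i j k l = wedge T kd i j k l}

/-- The Weyl part ⟨W⟩: algebraic curvature operators with vanishing Ricci tensor. -/
def spanW (n : ℕ) : Set (Fin n → Fin n → Fin n → Fin n → ℝ) :=
  {R | IsCurvOp R ∧ ∀ i j, ric R i j = 0}

/-- Polarization `Q(R,S) = (1/2)(Q(R+S) - Q(R) - Q(S))` of Hamilton's quadratic term. -/
def Qbil {N : Type*} [Fintype N] (R S : N → N → N → N → ℝ) (i j k l : N) : ℝ :=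
  (1/2) * (Q (fun a b c d => R a b c d + S a b c d) i j k l - Q R i j k l - Q S i j k l)

end Work

section Algebraic

variable {N : Type*}

theorem IsCurvOp.add {R S : N → N → N → N → ℝ} (hR : IsCurvOp R) (hS : IsCurvOp S) :
    IsCurvOp fun a b c d => R a b c d + S a b c d := by
  obtain ⟨hR₁, hR₂, hR₃, hR₄⟩ := hR
  obtain ⟨hS₁, hS₂, hS₃, hS₄⟩ := hS
  exact ⟨fun i j k l => by linarith [hR₁ i j k l, hS₁ i j k l],
    fun i j k l => by linarith [hR₂ i j k l, hS₂ i j k l],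
    fun i j k l => by linarith [hR₃ i j k l, hS₃ i j k l],
    fun i j k l => by linarith [hR₄ i j k l, hS₄ i j k l]⟩

theorem IsCurvOp.eq_sub {R : N → N → N → N → ℝ} (hR : IsCurvOp R) (a b p q : N) :
    R a b p q = R a p b q - R b p a q := by
  linarith [hR.2.2.2 a b p q, hR.1 p a b q]

theorem kd_comm [DecidableEq N] (a b : N) : kd a b = kd b a := by
  simp only [kd, eq_comm]

theorem wedge_mul_left (c : ℝ) (A B : N → N → ℝ) (i j k l : N) :
    wedge (fun a b => c * A a b) B i j k l = c * wedge A B i j k l := by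
  simp only [wedge]
  ring

theorem wedge_isCurvOp {A B : N → N → ℝ} (hA : ∀ a b, A a b = A b a)
    (hB : ∀ a b, B a b = B b a) : IsCurvOp (wedge A B) := by
  refine ⟨fun i j k l => ?_, fun i j k l => ?_, fun i j k l => ?_, fun i j k l => ?_⟩ <;>
    simp only [wedge]
  · ring
  · ring
  · rw [hA k i, hA l j, hA k j, hA l i, hB k i, hB l j, hB k j, hB l i]; ring
  · rw [hA j i, hA k i, hA k j, hB j i, hB k i, hB k j]; ring

noncomputable def qLin (B : N → N → N → N → ℝ) (i j k l : N) : ℝ :=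
  B i j k l - B i j l k + (1 / 2) * (B i k j l - B i l j k - B j k i l + B j l i k)

theorem isCurvOp_qLin {B : N → N → N → N → ℝ} (h₁ : ∀ a b c d, B b a d c = B a b c d)
    (h₂ : ∀ a b c d, B c d a b = B a b c d) : IsCurvOp (qLin B) := by
  refine ⟨fun i j k l => ?_, fun i j k l => ?_, fun i j k l => ?_, fun i j k l => ?_⟩ <;>
    simp only [qLin]
  · linarith [h₁ i j l k, h₁ i j k l]
  · ring
  · linarith [h₂ i k j l, h₁ l i k j, h₁ j i k l, h₂ i j k l, h₂ k l j i, h₁ l j k i, h₂ l j k i,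
      h₁ k j l i]
  · linarith [h₂ j k i l, h₂ k j i l, h₁ j k l i, h₂ j l k i, h₂ j i k l, h₁ i k j l, h₁ i j l k,
      h₂ j l i k, h₂ i j k l]

end Algebraic

section Contraction

variable {N : Type*} [Fintype N]

def crossContract (R S : N → N → N → N → ℝ) (a b c d : N) : ℝ :=
  ∑ p, ∑ q, R a p c q * S b p d q

/-- The action `R̊ T` of a curvature operator on symmetric 2-tensors. -/
def curvAction (R : N → N → N → N → ℝ) (T : N → N → ℝ) (a b : N) : ℝ :=
  ∑ p, ∑ q, R a p b q * T p q

theorem crossContract_swap (R S : N → N → N → N → ℝ) (a b c d : N) :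
    crossContract R S b a d c = crossContract S R a b c d :=
  Finset.sum_congr rfl fun _ _ => Finset.sum_congr rfl fun _ _ => mul_comm _ _

theorem crossContract_pair {R S : N → N → N → N → ℝ} (hR : IsCurvOp R) (hS : IsCurvOp S)
    (a b c d : N) : crossContract R S c d a b = crossContract R S a b c d := by
  rw [crossContract, Finset.sum_comm]
  exact Finset.sum_congr rfl fun q _ => Finset.sum_congr rfl fun p _ => by
    rw [hR.2.2.1, hS.2.2.1]

theorem IsCurvOp.ric_eq_sum {R : N → N → N → N → ℝ} (hR : IsCurvOp R) (p q : N) :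
    ric R p q = ∑ k, R k p k q :=
  Finset.sum_congr rfl fun k _ => by rw [hR.2.1, hR.1, neg_neg]

theorem IsCurvOp.ric_comm {R : N → N → N → N → ℝ} (hR : IsCurvOp R) (a b : N) :
    ric R a b = ric R b a :=
  Finset.sum_congr rfl fun k _ => hR.2.2.1 b k a k

theorem IsCurvOp.curvAction_comm {R : N → N → N → N → ℝ} (hR : IsCurvOp R) {T : N → N → ℝ}
    (hT : ∀ a b, T a b = T b a) (a b : N) : curvAction R T a b = curvAction R T b a := by
  rw [curvAction, Finset.sum_comm]
  exact Finset.sum_congr rfl fun q _ => Finset.sum_congr rfl fun p _ => by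
    rw [hR.2.2.1, hT]

theorem IsCurvOp.sum_curvAction_diag {R : N → N → N → N → ℝ} (hR : IsCurvOp R)
    (T : N → N → ℝ) : ∑ a, curvAction R T a a = ∑ p, ∑ q, ric R p q * T p q := by
  simp only [curvAction, hR.ric_eq_sum, Finset.sum_mul]
  rw [Finset.sum_comm]
  exact Finset.sum_congr rfl fun p _ => Finset.sum_comm

theorem csq_eq {R : N → N → N → N → ℝ} (hR : IsCurvOp R) (i j k l : N) :
    csq R i j k l = (1 / 2) * (crossContract R R i k j l - crossContract R R i l j k
      - crossContract R R j k i l + crossContract R R j l i k) := by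
  have hsplit : ∀ p q, R i j p q * R k l p q =
      (R i p j q - R j p i q) * (R k p l q - R l p k q) := fun p q => by
    rw [hR.eq_sub i j, hR.eq_sub k l]
  simp only [csq, crossContract, hsplit, sub_mul, mul_sub, Finset.sum_sub_distrib]
  ring

theorem Q_eq_qLin {R : N → N → N → N → ℝ} (hR : IsCurvOp R) (i j k l : N) :
    Q R i j k l = qLin (crossContract R R) i j k l := by
  rw [Q, csq_eq hR, sharp, qLin]
  simp only [crossContract, Finset.sum_sub_distrib]
  ring

theorem Qbil_eq_qLin {R S : N → N → N → N → ℝ} (hR : IsCurvOp R) (hS : IsCurvOp S)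
    (i j k l : N) : Qbil R S i j k l =
      qLin (fun a b c d => (1 / 2) * (crossContract R S a b c d + crossContract S R a b c d))
        i j k l := by
  rw [Qbil, Q_eq_qLin (hR.add hS), Q_eq_qLin hR, Q_eq_qLin hS]
  simp only [qLin, crossContract, add_mul, mul_add, Finset.sum_add_distrib]
  ring

theorem isCurvOp_Q {R : N → N → N → N → ℝ} (hR : IsCurvOp R) : IsCurvOp (Q R) := by
  have h : Q R = qLin (crossContract R R) := by
    funext i j k l
    exact Q_eq_qLin hR i j k l
  rw [h]
  exact isCurvOp_qLin (crossContract_swap R R) (crossContract_pair hR hR)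

theorem isCurvOp_Qbil {R S : N → N → N → N → ℝ} (hR : IsCurvOp R) (hS : IsCurvOp S) :
    IsCurvOp (Qbil R S) := by
  obtain ⟨h₁, h₂, h₃, h₄⟩ := isCurvOp_Q (hR.add hS)
  obtain ⟨hR₁, hR₂, hR₃, hR₄⟩ := isCurvOp_Q hR
  obtain ⟨hS₁, hS₂, hS₃, hS₄⟩ := isCurvOp_Q hS
  refine ⟨fun i j k l => ?_, fun i j k l => ?_, fun i j k l => ?_, fun i j k l => ?_⟩ <;>
    simp only [Qbil]
  · linarith [h₁ i j k l, hR₁ i j k l, hS₁ i j k l]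
  · linarith [h₂ i j k l, hR₂ i j k l, hS₂ i j k l]
  · linarith [h₃ i j k l, hR₃ i j k l, hS₃ i j k l]
  · linarith [h₄ i j k l, hR₄ i j k l, hS₄ i j k l]

/-- By Bianchi `R_ipkq - R_ikpq = R_kpiq`; expanding `∑ (R_ipkq - R_ikpq) (R_jpkq - R_jkpq)`
and comparing with `R_jpkq = R_jkpq + R_jqkp` gives the identity. -/
theorem sum_crossContract_diag {R : N → N → N → N → ℝ} (hR : IsCurvOp R) (i j : N) :
    ∑ k, crossContract R R i j k k = 2 * ∑ k, crossContract R R i k k j := by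
  have hdiff : ∀ a k p q, R a p k q - R a k p q = R k p a q := fun a k p q => by
    linarith [hR.eq_sub a p k q, hR.1 p k a q]
  have hY : ∑ k, crossContract R R i k k j = ∑ k, ∑ p, ∑ q, R i p k q * R j q k p :=
    Finset.sum_congr rfl fun k _ => Finset.sum_congr rfl fun p _ =>
      Finset.sum_congr rfl fun q _ => by rw [hR.2.2.1 j q k p]
  have hXZY : ∑ k, crossContract R R i j k k = ∑ k, ∑ p, ∑ q, R i p k q * R j k p q
      + ∑ k, ∑ p, ∑ q, R i p k q * R j q k p := by
    simp only [crossContract, ← Finset.sum_add_distrib, ← mul_add]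
    refine Finset.sum_congr rfl fun k _ => Finset.sum_congr rfl fun p _ =>
      Finset.sum_congr rfl fun q _ => ?_
    rw [hR.eq_sub j p k q, hR.2.2.1 j q p k, hR.2.1 j q p k]
    ring
  have hsq : ∑ k, crossContract R R i j k k =
      ∑ k, ∑ p, ∑ q, (R i p k q - R i k p q) * (R j p k q - R j k p q) := by
    simp only [crossContract, hdiff]
    refine Finset.sum_congr rfl fun k _ => ?_
    rw [Finset.sum_comm]
    exact Finset.sum_congr rfl fun q _ => Finset.sum_congr rfl fun p _ => by
      rw [hR.2.2.1 i p k q, hR.2.2.1 j p k q]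
  have hswapX : ∑ k, ∑ p, ∑ q, R i k p q * R j k p q = ∑ k, crossContract R R i j k k :=
    Finset.sum_comm
  have hswapZ : ∑ k, ∑ p, ∑ q, R i k p q * R j p k q =
      ∑ k, ∑ p, ∑ q, R i p k q * R j k p q :=
    Finset.sum_comm
  simp only [sub_mul, mul_sub, Finset.sum_sub_distrib, hswapX, hswapZ] at hsq
  rw [hY]
  simp only [crossContract] at hsq hXZY ⊢
  linarith

theorem ric_Q {R : N → N → N → N → ℝ} (hR : IsCurvOp R) (i j : N) :
    ric (Q R) i j = curvAction R (ric R) i j := by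
  have hpair := crossContract_pair hR hR
  calc ric (Q R) i j
      = ∑ k, (crossContract R R i k j k
        + (crossContract R R i j k k - 2 * crossContract R R i k k j)) :=
        Finset.sum_congr rfl fun k _ => by
          rw [Q_eq_qLin hR, qLin, hpair i k k j, hpair i j k k]
          ring
    _ = ∑ k, crossContract R R i k j k := by
        rw [Finset.sum_add_distrib, Finset.sum_sub_distrib, ← Finset.mul_sum,
          sum_crossContract_diag hR, sub_self, add_zero]
    _ = curvAction R (ric R) i j := by
        simp only [crossContract, curvAction, hR.ric_eq_sum, Finset.mul_sum]
        rw [Finset.sum_comm]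
        exact Finset.sum_congr rfl fun p _ => Finset.sum_comm

theorem ric_Qbil {R S : N → N → N → N → ℝ} (hR : IsCurvOp R) (hS : IsCurvOp S) (i j : N) :
    ric (Qbil R S) i j = (1 / 2) * (curvAction R (ric S) i j + curvAction S (ric R) i j) := by
  have hpolar : ric (Qbil R S) i j = (1 / 2) * (ric (Q fun a b c d => R a b c d + S a b c d) i j
      - ric (Q R) i j - ric (Q S) i j) := by
    simp only [ric, Qbil, ← Finset.mul_sum, Finset.sum_sub_distrib]
  have hadd : ∀ p q, ric (fun a b c d => R a b c d + S a b c d) p q = ric R p q + ric S p q :=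
    fun p q => Finset.sum_add_distrib
  rw [hpolar, ric_Q (hR.add hS), ric_Q hR, ric_Q hS]
  simp only [curvAction, hadd, mul_add, add_mul, Finset.sum_add_distrib]
  ring

end Contraction

section Wedge

variable {N : Type*} [Fintype N] [DecidableEq N]

theorem curvAction_kd (R : N → N → N → N → ℝ) (a b : N) : curvAction R kd a b = ric R a b := by
  simp [curvAction, kd, ric]

theorem ric_wedge_kd (A : N → N → ℝ) (a b : N) :
    ric (wedge A kd) a b = (((Fintype.card N : ℝ) - 2) * A a b + (∑ k, A k k) * kd a b) / 2 := by
  simp only [ric, wedge, mul_add, mul_sub, Finset.sum_add_distrib, Finset.sum_sub_distrib]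
  simp [kd, Finset.card_univ, ← Finset.mul_sum]
  split_ifs <;> ring

theorem crossContract_wedge_kd (T : N → N → ℝ) (X : N → N → N → N → ℝ) (a b c d : N) :
    crossContract (wedge T kd) X a b c d = (1 / 2) * (T a c * ric X b d
      + kd a c * curvAction X T b d - ∑ p, T a p * X b c d p - ∑ p, T p c * X b p d a) := by
  simp [crossContract, curvAction, wedge, kd, ric, mul_add, mul_sub, add_mul, sub_mul,
    Finset.sum_add_distrib, Finset.sum_sub_distrib, Finset.mul_sum, mul_assoc, mul_comm,
    mul_left_comm]

/-- After `crossContract_wedge_kd`, the terms of the form `∑ p, T x p * X u v w p` cancel in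
pairs by the antisymmetry of `X` in its first two slots. -/
theorem Qbil_wedge_kd {T : N → N → ℝ} (hT : ∀ a b, T a b = T b a) {X : N → N → N → N → ℝ}
    (hX : IsCurvOp X) (i j k l : N) :
    Qbil (wedge T kd) X i j k l = wedge (fun a b => (1 / 2) * curvAction X T a b) kd i j k l
      + (1 / 2) * wedge T (ric X) i j k l := by
  have hM : ∀ a b c d, ∑ p, T p c * X b p d a = ∑ p, T c p * X d a b p := fun a b c d =>
    Finset.sum_congr rfl fun p _ => by rw [hT, hX.2.2.1]
  have hanti : ∀ x u v w, ∑ p, T x p * X v u w p = -∑ p, T x p * X u v w p := fun x u v w => by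
    rw [← Finset.sum_neg_distrib]
    exact Finset.sum_congr rfl fun p _ => by rw [hX.1]; ring
  have hΦ := hX.curvAction_comm hT
  rw [Qbil_eq_qLin (wedge_isCurvOp hT kd_comm) hX]
  simp only [qLin, ← crossContract_swap (wedge T kd) X, crossContract_wedge_kd, hM, wedge]
  rw [hT j i, hT l k, kd_comm j i, kd_comm l k, hX.ric_comm l k, hX.ric_comm j i, hΦ l k, hΦ j i]
  linarith [hanti i j k l, hanti i j l k, hanti j i k l, hanti j i l k, hanti k i l j,
    hanti k j l i, hanti l i k j, hanti l j k i]

theorem ric_wedge_kd_of_trace_eq_zero {A : N → N → ℝ} (hA : ∑ k, A k k = 0) (a b : N) :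
    ric (wedge A kd) a b = ((Fintype.card N : ℝ) - 2) / 2 * A a b := by
  rw [ric_wedge_kd, hA]
  ring

theorem ric_wedge_smul_kd (c : ℝ) (a b : N) :
    ric (wedge (fun p q => c * kd p q) kd) a b = c * ((Fintype.card N : ℝ) - 1) * kd a b := by
  rw [ric_wedge_kd]
  simp only [kd, mul_ite, mul_one, mul_zero, Finset.sum_const,
    Finset.card_univ, if_true, nsmul_eq_mul]
  split_ifs <;> ring

theorem Qbil_wedge_smul_kd {X : N → N → N → N → ℝ} (c : ℝ) (hX : IsCurvOp X) (i j k l : N) :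
    Qbil (wedge (fun p q => c * kd p q) kd) X i j k l = c * wedge (ric X) kd i j k l := by
  have hΦ : ∀ a b, curvAction X (fun p q => c * kd p q) a b = c * ric X a b := fun a b => by
    rw [← curvAction_kd]
    simp only [curvAction, Finset.mul_sum]
    exact Finset.sum_congr rfl fun _ _ => Finset.sum_congr rfl fun _ _ => by ring
  rw [Qbil_wedge_kd (fun a b => congrArg _ (kd_comm a b)) hX]
  simp only [hΦ, wedge]
  ring

end Wedge

section Pieces

variable {n : ℕ} {R S : Fin n → Fin n → Fin n → Fin n → ℝ}

theorem mem_spanI_iff : R ∈ spanI n ↔ ∃ c : ℝ, R = wedge (fun p q => c * kd p q) kd := by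
  simp only [spanI, Set.mem_ofPred_eq, funext_iff, wedge_mul_left]

theorem mem_spanRic0_iff : R ∈ spanRic0 n ↔ ∃ T : Fin n → Fin n → ℝ,
    (∀ i j, T i j = T j i) ∧ ∑ i, T i i = 0 ∧ R = wedge T kd := by
  simp only [spanRic0, Set.mem_ofPred_eq, funext_iff]

theorem Qbil_mem_spanI (hR : R ∈ spanI n) (hS : S ∈ spanI n) : Qbil R S ∈ spanI n := by
  obtain ⟨c, rfl⟩ := mem_spanI_iff.1 hR
  obtain ⟨c', rfl⟩ := mem_spanI_iff.1 hS
  refine ⟨c * (c' * ((n : ℝ) - 1)), fun i j k l => ?_⟩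
  rw [Qbil_wedge_smul_kd c (wedge_isCurvOp (fun a b => congrArg _ (kd_comm a b)) kd_comm)]
  simp only [wedge, ric_wedge_smul_kd, Fintype.card_fin]
  ring

theorem Qbil_mem_spanRic0_of_mem_spanI (hR : R ∈ spanI n) (hS : S ∈ spanRic0 n) :
    Qbil R S ∈ spanRic0 n := by
  obtain ⟨c, rfl⟩ := mem_spanI_iff.1 hR
  obtain ⟨T, hT, htr, rfl⟩ := mem_spanRic0_iff.1 hS
  refine mem_spanRic0_iff.2 ⟨fun a b => c * (((n : ℝ) - 2) / 2) * T a b,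
    fun a b => congrArg _ (hT a b), by rw [← Finset.mul_sum, htr, mul_zero], ?_⟩
  funext i j k l
  rw [Qbil_wedge_smul_kd c (wedge_isCurvOp hT kd_comm)]
  simp only [wedge, ric_wedge_kd_of_trace_eq_zero htr, Fintype.card_fin]
  ring

theorem Qbil_eq_zero_of_mem_spanI_of_mem_spanW (hR : R ∈ spanI n) (hS : S ∈ spanW n)
    (i j k l : Fin n) : Qbil R S i j k l = 0 := by
  obtain ⟨c, rfl⟩ := mem_spanI_iff.1 hR
  rw [Qbil_wedge_smul_kd c hS.1]
  simp [wedge, hS.2]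

theorem Qbil_mem_spanW (hR : R ∈ spanW n) (hS : S ∈ spanW n) : Qbil R S ∈ spanW n :=
  ⟨isCurvOp_Qbil hR.1 hS.1, fun i j => by simp [ric_Qbil hR.1 hS.1, curvAction, hR.2, hS.2]⟩

theorem Qbil_mem_spanRic0_of_mem_spanW (hR : R ∈ spanRic0 n) (hS : S ∈ spanW n) :
    Qbil R S ∈ spanRic0 n := by
  obtain ⟨T, hT, -, rfl⟩ := mem_spanRic0_iff.1 hR
  refine mem_spanRic0_iff.2 ⟨fun a b => (1 / 2) * curvAction S T a b,
    fun a b => congrArg _ (hS.1.curvAction_comm hT a b), ?_, ?_⟩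
  · simp [← Finset.mul_sum, hS.1.sum_curvAction_diag, hS.2]
  · funext i j k l
    rw [Qbil_wedge_kd hT hS.1]
    simp [wedge, hS.2]

end Pieces

theorem stmt4_general {n : ℕ} :
    (∀ R S, R ∈ spanI n → S ∈ spanI n → Qbil R S ∈ spanI n) ∧
    (∀ R S, R ∈ spanI n → S ∈ spanRic0 n → Qbil R S ∈ spanRic0 n) ∧
    (∀ R S, R ∈ spanI n → S ∈ spanW n → ∀ i j k l, Qbil R S i j k l = 0) ∧
    (∀ R S, R ∈ spanW n → S ∈ spanW n → Qbil R S ∈ spanW n) ∧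
    (∀ R S, R ∈ spanRic0 n → S ∈ spanW n → Qbil R S ∈ spanRic0 n) :=
  ⟨fun _ _ => Qbil_mem_spanI, fun _ _ => Qbil_mem_spanRic0_of_mem_spanI,
    fun _ _ => Qbil_eq_zero_of_mem_spanI_of_mem_spanW, fun _ _ => Qbil_mem_spanW,
    fun _ _ => Qbil_mem_spanRic0_of_mem_spanW⟩

/-- Behaviour of the bilinear map `Q(·,·)` on the irreducible pieces of the
decomposition of algebraic curvature operators. -/
theorem stmt4 {n : ℕ} (hn : 4 ≤ n) :
    (∀ R S, R ∈ spanI n → S ∈ spanI n → Qbil R S ∈ spanI n) ∧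
    (∀ R S, R ∈ spanI n → S ∈ spanRic0 n → Qbil R S ∈ spanRic0 n) ∧
    (∀ R S, R ∈ spanI n → S ∈ spanW n → ∀ i j k l, Qbil R S i j k l = 0) ∧
    (∀ R S, R ∈ spanW n → S ∈ spanW n → Qbil R S ∈ spanW n) ∧
    (∀ R S, R ∈ spanRic0 n → S ∈ spanW n → Qbil R S ∈ spanRic0 n) :=
  stmt4_general

end PaperStmt
end

section
/- For any algebraic curvature operator R on ℝ^n, ⟨Ric(R), Ric(Q(R))⟩ = 2⟨R, Ric ∧ Ric⟩ = nλ̄³ + ((2n-3)/(n-1))λ̄|Ric₀|² - (2/(n-2))⟨Ric₀,(Ric₀²)₀⟩ + 2⟨W, Ric₀∧Ric₀⟩. -/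
open scoped BigOperators

namespace PaperStmt

noncomputable section Work

variable {N : Type*} [Fintype N] [DecidableEq N]

section AuxProof
set_option linter.unusedSectionVars false

/-! ### Auxiliary machinery -/

def SS (X : N → N → N → N → ℝ) (A B : N → N → ℝ) : ℝ :=
  ∑ i, ∑ j, ∑ k, ∑ l, X i j k l * (A i k * B j l)

lemma sum3_swap12 (f : N → N → N → ℝ) :
    ∑ a, ∑ b, ∑ c, f a b c = ∑ a, ∑ b, ∑ c, f b a c := Finset.sum_comm

lemma sum3_swap23 (f : N → N → N → ℝ) :
    ∑ a, ∑ b, ∑ c, f a b c = ∑ a, ∑ b, ∑ c, f a c b :=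
  Finset.sum_congr rfl fun _ _ => Finset.sum_comm

lemma sum3_swap13 (f : N → N → N → ℝ) :
    ∑ a, ∑ b, ∑ c, f a b c = ∑ a, ∑ b, ∑ c, f c b a := by
  rw [sum3_swap23 f, sum3_swap12 (fun a b c => f a c b),
      sum3_swap23 (fun a b c => f b c a)]

lemma sum3_cycle (f : N → N → N → ℝ) :
    ∑ a, ∑ b, ∑ c, f a b c = ∑ a, ∑ b, ∑ c, f b c a := by
  rw [sum3_swap23 f, sum3_swap12 (fun a b c => f a c b)]

lemma sum_ite_pull (c : Prop) [Decidable c] (f : N → ℝ) :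
    (∑ x, (if c then f x else 0)) = if c then ∑ x, f x else 0 := by
  split <;> simp

lemma kd_symm (i j : N) : kd i j = kd j i := by
  unfold kd; by_cases h : i = j <;> simp [h, Ne.symm, eq_comm]

lemma ric_symm {R : N → N → N → N → ℝ} (hR : IsCurvOp R) (i j : N) :
    ric R i j = ric R j i :=
  Finset.sum_congr rfl fun k _ => (hR.2.2.1 i k j k).symm

lemma ric_flip {R : N → N → N → N → ℝ} (hR : IsCurvOp R) (p q : N) :
    ∑ k, R k p k q = ric R p q :=
  Finset.sum_congr rfl fun k _ => by rw [hR.1, hR.2.1]; ring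

lemma ricQ {R : N → N → N → N → ℝ} (hR : IsCurvOp R) (i j : N) :
    ric (Q R) i j = ∑ p, ∑ q, R i p j q * ric R p q := by
  obtain ⟨h1, h2, h3, h4⟩ := hR
  have hA : ∀ D A H : ℝ, D = A - H → H = D → ∀ x : ℝ, (1/2) * A + (x - D) = x := by
    intro D A H hDA hHD x; rw [hHD] at hDA; linarith
  have hsplit : ric (Q R) i j =
      (1/2) * (∑ k, ∑ p, ∑ q, R i k p q * R j k p q)
      + ((∑ k, ∑ p, ∑ q, R i p j q * R k p k q)
         - ∑ k, ∑ p, ∑ q, R i p k q * R k p j q) := by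
    unfold ric Q csq sharp
    rw [Finset.sum_add_distrib, Finset.mul_sum]
    congr 1
    rw [← Finset.sum_sub_distrib]
    exact Finset.sum_congr rfl fun k _ => by
      rw [← Finset.sum_sub_distrib]
      exact Finset.sum_congr rfl fun p _ => by rw [← Finset.sum_sub_distrib]
  have hC : (∑ k, ∑ p, ∑ q, R i p j q * R k p k q)
      = ∑ p, ∑ q, R i p j q * ric R p q := by
    rw [sum3_swap12 (fun k p q => R i p j q * R k p k q)]
    refine Finset.sum_congr rfl fun a _ => ?_
    rw [Finset.sum_comm]
    refine Finset.sum_congr rfl fun b _ => ?_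
    rw [← Finset.mul_sum, ric_flip ⟨h1, h2, h3, h4⟩]
  have hDA : (∑ k, ∑ p, ∑ q, R i p k q * R k p j q)
      = (∑ k, ∑ p, ∑ q, R i k p q * R j k p q)
        - ∑ k, ∑ p, ∑ q, R i p k q * R j k p q := by
    have step : (∑ k, ∑ p, ∑ q, R i p k q * R k p j q)
        = (∑ k, ∑ p, ∑ q, R i p k q * R j p k q)
          - ∑ k, ∑ p, ∑ q, R i p k q * R j k p q := by
      rw [← Finset.sum_sub_distrib]
      refine Finset.sum_congr rfl fun k _ => ?_
      rw [← Finset.sum_sub_distrib]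
      refine Finset.sum_congr rfl fun p _ => ?_
      rw [← Finset.sum_sub_distrib]
      refine Finset.sum_congr rfl fun q _ => ?_
      have e : R k p j q = R j p k q - R j k p q := by
        have b := h4 k p j q
        have a := h1 j p k q
        linarith
      rw [e]; ring
    rw [step, sum3_swap12 (fun k p q => R i p k q * R j p k q)]
  have hHD : (∑ k, ∑ p, ∑ q, R i p k q * R j k p q)
      = ∑ k, ∑ p, ∑ q, R i p k q * R k p j q := by
    have e1 : (∑ k, ∑ p, ∑ q, R i p k q * R j k p q)
        = ∑ k, ∑ p, ∑ q, R i p k q * R p q j k :=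
      Finset.sum_congr rfl fun k _ => Finset.sum_congr rfl fun p _ =>
        Finset.sum_congr rfl fun q _ => by rw [h3 j k p q]
    rw [e1, sum3_swap13 (fun k p q => R i p k q * R p q j k)]
    refine Finset.sum_congr rfl fun k _ => Finset.sum_congr rfl fun p _ =>
      Finset.sum_congr rfl fun q _ => ?_
    rw [h2 i p k q, h1 k p j q]; ring
  rw [hsplit, hC]
  exact hA _ _ _ hDA hHD _

lemma part1 {R : N → N → N → N → ℝ} (hR : IsCurvOp R) :
    inner2 (ric R) (ric (Q R)) = SS R (ric R) (ric R) := by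
  unfold inner2 SS
  have e1 : ∀ i j, ric R i j * ric (Q R) i j
      = ∑ p, ∑ q, R i p j q * (ric R i j * ric R p q) := by
    intro i j
    rw [ricQ hR, Finset.mul_sum]
    refine Finset.sum_congr rfl fun p _ => ?_
    rw [Finset.mul_sum]
    exact Finset.sum_congr rfl fun q _ => by ring
  calc (∑ i, ∑ j, ric R i j * ric (Q R) i j)
      = ∑ i, ∑ j, ∑ p, ∑ q, R i p j q * (ric R i j * ric R p q) :=
        Finset.sum_congr rfl fun i _ => Finset.sum_congr rfl fun j _ => e1 i j
    _ = ∑ i, ∑ j, ∑ k, ∑ l, R i j k l * (ric R i k * ric R j l) :=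
        Finset.sum_congr rfl fun i _ =>
          sum3_swap12 (fun a b c => R i b a c * (ric R i a * ric R b c))

lemma red (X : N → N → N → N → ℝ) (hX : ∀ i j k l, X i j l k = -X i j k l)
    (A : N → N → ℝ) : 2 * inner4 X (wedge A A) = SS X A A := by
  have hsw : ∀ i j, (∑ k, ∑ l, X i j k l * (A i l * A j k))
      = -∑ k, ∑ l, X i j k l * (A i k * A j l) := by
    intro i j
    calc (∑ k, ∑ l, X i j k l * (A i l * A j k))
        = ∑ k, ∑ l, -(X i j l k * (A i l * A j k)) :=
          Finset.sum_congr rfl fun k _ => Finset.sum_congr rfl fun l _ => by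
            rw [hX i j l k]; ring
      _ = -∑ k, ∑ l, X i j l k * (A i l * A j k) := by
          simp [Finset.sum_neg_distrib]
      _ = -∑ k, ∑ l, X i j k l * (A i k * A j l) := by rw [Finset.sum_comm]
  unfold inner4 wedge SS
  have main : ∀ i j, (∑ k, ∑ l, X i j k l *
        ((1/2) * (A i k * A j l + A i k * A j l - A i l * A j k - A j k * A i l)))
      = 2 * ∑ k, ∑ l, X i j k l * (A i k * A j l) := by
    intro i j
    have e : (∑ k, ∑ l, X i j k l *
        ((1/2) * (A i k * A j l + A i k * A j l - A i l * A j k - A j k * A i l)))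
        = (∑ k, ∑ l, (X i j k l * (A i k * A j l) - X i j k l * (A i l * A j k))) :=
      Finset.sum_congr rfl fun k _ => Finset.sum_congr rfl fun l _ => by ring
    rw [e]
    rw [show (∑ k, ∑ l, (X i j k l * (A i k * A j l) - X i j k l * (A i l * A j k)))
        = (∑ k, ∑ l, X i j k l * (A i k * A j l))
          - ∑ k, ∑ l, X i j k l * (A i l * A j k) from by
      rw [← Finset.sum_sub_distrib]
      exact Finset.sum_congr rfl fun k _ => Finset.sum_sub_distrib _ _]
    rw [hsw i j]; ring
  calc 2 * ((1/4) * ∑ i, ∑ j, ∑ k, ∑ l, X i j k l *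
        ((1/2) * (A i k * A j l + A i k * A j l - A i l * A j k - A j k * A i l)))
      = 2 * ((1/4) * ∑ i, ∑ j, 2 * ∑ k, ∑ l, X i j k l * (A i k * A j l)) := by
        congr 2
        exact Finset.sum_congr rfl fun i _ => Finset.sum_congr rfl fun j _ => main i j
    _ = ∑ i, ∑ j, ∑ k, ∑ l, X i j k l * (A i k * A j l) := by
        simp only [← Finset.mul_sum]; ring

lemma T1 (A : N → N → ℝ) (hs : ∀ i j, A i j = A j i) (ht : ∑ i, A i i = 0) :
    SS (wedge kd kd) A A = -norm2sq A := by
  unfold SS wedge kd norm2sq inner2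
  simp only [mul_ite, ite_mul, mul_zero, zero_mul, mul_one, one_mul,
    Finset.sum_ite_eq, Finset.sum_ite_eq', Finset.mem_univ, if_true,
    Finset.sum_sub_distrib, Finset.sum_add_distrib, mul_sub, mul_add,
    sub_mul, add_mul, sum_ite_pull]
  have e1 : (∑ x : N, ∑ y : N, 1/2 * (A x x * A y y)) = 0 := by
    have inner : ∀ x : N, (∑ y : N, 1/2 * (A x x * A y y)) = 0 := by
      intro x
      calc (∑ y : N, 1/2 * (A x x * A y y))
          = ∑ y : N, (1/2 * A x x) * A y y :=
            Finset.sum_congr rfl fun y _ => by ring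
        _ = (1/2 * A x x) * ∑ y : N, A y y := (Finset.mul_sum _ _ _).symm
        _ = 0 := by rw [ht]; ring
    exact Finset.sum_eq_zero fun x _ => inner x
  have e2 : (∑ x : N, ∑ y : N, 1/2 * (A x y * A y x))
      = 1/2 * ∑ i : N, ∑ j : N, A i j * A i j := by
    rw [Finset.mul_sum]
    refine Finset.sum_congr rfl fun i _ => ?_
    rw [Finset.mul_sum]
    exact Finset.sum_congr rfl fun j _ => by rw [hs j i]
  linarith [e1, e2]

lemma T2 (A : N → N → ℝ) (hs : ∀ i j, A i j = A j i) (ht : ∑ i, A i i = 0) :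
    SS (wedge A kd) A A = -(∑ i, ∑ j, ∑ k, A i j * (A j k * A k i)) := by
  unfold SS wedge kd
  simp only [mul_ite, ite_mul, mul_zero, zero_mul, mul_one, one_mul,
    Finset.sum_ite_eq, Finset.sum_ite_eq', Finset.mem_univ, if_true,
    Finset.sum_sub_distrib, Finset.sum_add_distrib, mul_sub, mul_add,
    sub_mul, add_mul, sum_ite_pull]
  have U1 : (∑ x : N, ∑ y : N, ∑ z : N, 1/2 * A x z * (A x z * A y y)) = 0 := by
    refine Finset.sum_eq_zero fun x _ => ?_
    rw [Finset.sum_comm]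
    refine Finset.sum_eq_zero fun z _ => ?_
    calc (∑ y : N, 1/2 * A x z * (A x z * A y y))
        = ∑ y : N, (1/2 * A x z * A x z) * A y y :=
          Finset.sum_congr rfl fun y _ => by ring
      _ = (1/2 * A x z * A x z) * ∑ y : N, A y y := (Finset.mul_sum _ _ _).symm
      _ = 0 := by rw [ht]; ring
  have U2 : (∑ x : N, ∑ y : N, ∑ z : N, 1/2 * A y z * (A x x * A y z)) = 0 := by
    calc (∑ x : N, ∑ y : N, ∑ z : N, 1/2 * A y z * (A x x * A y z))
        = ∑ x : N, A x x * (∑ y : N, ∑ z : N, 1/2 * A y z * A y z) := by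
          refine Finset.sum_congr rfl fun x _ => ?_
          rw [Finset.mul_sum]
          refine Finset.sum_congr rfl fun y _ => ?_
          rw [Finset.mul_sum]
          exact Finset.sum_congr rfl fun z _ => by ring
      _ = (∑ x : N, A x x) * (∑ y : N, ∑ z : N, 1/2 * A y z * A y z) :=
          (Finset.sum_mul _ _ _).symm
      _ = 0 := by rw [ht]; ring
  have U3 : (∑ x : N, ∑ y : N, ∑ z : N, 1/2 * A x z * (A x y * A y z))
      = 1/2 * ∑ i : N, ∑ j : N, ∑ k : N, A i j * (A j k * A k i) := by
    rw [Finset.mul_sum]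
    refine Finset.sum_congr rfl fun i _ => ?_
    rw [Finset.mul_sum]
    refine Finset.sum_congr rfl fun j _ => ?_
    rw [Finset.mul_sum]
    refine Finset.sum_congr rfl fun k _ => ?_
    rw [hs i k]; ring
  have U4 : (∑ x : N, ∑ y : N, ∑ z : N, 1/2 * A y z * (A x z * A y x))
      = 1/2 * ∑ i : N, ∑ j : N, ∑ k : N, A i j * (A j k * A k i) := by
    have cyc := sum3_cycle (fun a b c => A a b * (A b c * A c a))
    rw [show (∑ i : N, ∑ j : N, ∑ k : N, A i j * (A j k * A k i))
        = ∑ a : N, ∑ b : N, ∑ c : N, A b c * (A c a * A a b) from cyc,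
      Finset.mul_sum]
    refine Finset.sum_congr rfl fun i _ => ?_
    rw [Finset.mul_sum]
    refine Finset.sum_congr rfl fun j _ => ?_
    rw [Finset.mul_sum]
    refine Finset.sum_congr rfl fun k _ => ?_
    rw [hs i k, hs j i]; ring
  linarith [U1, U2, U3, U4]

lemma weyl_alt {n : ℕ} {R : N → N → N → N → ℝ} (hR : IsCurvOp R) (i j k l : N) :
    weyl n R i j l k = -weyl n R i j k l := by
  unfold weyl RI RRic0 wedge
  rw [hR.2.1]; ring

lemma SS_weyl {n : ℕ} {R : N → N → N → N → ℝ} (A B : N → N → ℝ) :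
    SS (weyl n R) A B = SS R A B
      - (lam n R / ((n : ℝ) - 1)) * SS (wedge kd kd) A B
      - (2 / ((n : ℝ) - 2)) * SS (wedge (ric0 n R) kd) A B := by
  unfold SS weyl RI RRic0
  simp only [sub_mul, mul_assoc, Finset.sum_sub_distrib, ← Finset.mul_sum]

lemma scal_sum {R : N → N → N → N → ℝ} : (∑ i, ∑ j, R i j i j) = scal R := rfl

lemma L3 {R : N → N → N → N → ℝ} (c : ℝ) :
    SS R (fun i k => c * kd i k) (fun j l => c * kd j l) = c^2 * scal R := by
  unfold SS kd
  simp only [mul_ite, ite_mul, mul_zero, zero_mul, mul_one, one_mul,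
    Finset.sum_ite_eq, Finset.sum_ite_eq', Finset.mem_univ, if_true]
  rw [← scal_sum, Finset.mul_sum]
  refine Finset.sum_congr rfl fun i _ => ?_
  rw [Finset.mul_sum]
  exact Finset.sum_congr rfl fun j _ => by ring

lemma L1 {R : N → N → N → N → ℝ} (A : N → N → ℝ) (c : ℝ) :
    SS R A (fun j l => c * kd j l) = c * ∑ i, ∑ k, ric R i k * A i k := by
  unfold SS kd ric
  simp only [mul_ite, ite_mul, mul_zero, zero_mul, mul_one, one_mul,
    Finset.sum_ite_eq, Finset.sum_ite_eq', Finset.mem_univ, if_true]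
  rw [Finset.mul_sum]
  refine Finset.sum_congr rfl fun i _ => ?_
  rw [Finset.sum_comm, Finset.mul_sum]
  refine Finset.sum_congr rfl fun k _ => ?_
  rw [Finset.sum_mul, Finset.mul_sum]
  exact Finset.sum_congr rfl fun j _ => by ring

lemma L2 {R : N → N → N → N → ℝ} (hR : IsCurvOp R) (B : N → N → ℝ) (c : ℝ) :
    SS R (fun i k => c * kd i k) B = c * ∑ j, ∑ l, ric R j l * B j l := by
  unfold SS kd
  simp only [mul_ite, ite_mul, mul_zero, zero_mul, mul_one, one_mul,
    Finset.sum_ite_eq, Finset.sum_ite_eq', Finset.mem_univ, if_true, sum_ite_pull]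
  rw [← sum3_cycle (fun x y z => R z x z y * (c * B x y)), Finset.mul_sum]
  refine Finset.sum_congr rfl fun a _ => ?_
  rw [Finset.mul_sum]
  refine Finset.sum_congr rfl fun b _ => ?_
  calc (∑ x, R x a x b * (c * B a b)) = (∑ x, R x a x b) * (c * B a b) :=
        (Finset.sum_mul _ _ _).symm
    _ = ric R a b * (c * B a b) := by rw [ric_flip hR]
    _ = c * (ric R a b * B a b) := by ring

lemma L4 {R : N → N → N → N → ℝ} (A : N → N → ℝ) (c : ℝ)
    (r : N → N → ℝ) (hr : ∀ i j, r i j = A i j + c * kd i j) :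
    SS R r r = SS R A A + SS R A (fun j l => c * kd j l)
      + SS R (fun i k => c * kd i k) A
      + SS R (fun i k => c * kd i k) (fun j l => c * kd j l) := by
  unfold SS
  simp only [← Finset.sum_add_distrib]
  refine Finset.sum_congr rfl fun i _ => Finset.sum_congr rfl fun j _ =>
    Finset.sum_congr rfl fun k _ => Finset.sum_congr rfl fun l _ => ?_
  rw [hr i k, hr j l]; ring

end AuxProof

/-- `⟨Ric(R), Ric(Q(R))⟩ = 2⟨R, Ric∧Ric⟩` and its expression in terms of the
irreducible decomposition. -/
theorem stmt6 {n : ℕ} (hn : 4 ≤ n) (R : Fin n → Fin n → Fin n → Fin n → ℝ)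
    (hR : IsCurvOp R) :
    inner2 (ric R) (ric (Q R)) = 2 * inner4 R (wedge (ric R) (ric R)) ∧
    2 * inner4 R (wedge (ric R) (ric R)) =
      (n : ℝ) * (lam n R) ^ 3
      + ((2 * (n : ℝ) - 3) / ((n : ℝ) - 1)) * lam n R * norm2sq (ric0 n R)
      - (2 / ((n : ℝ) - 2)) * inner2 (ric0 n R) (tless n (matsq (ric0 n R)))
      + 2 * inner4 (weyl n R) (wedge (ric0 n R) (ric0 n R)) := by
  have hn4 : (4 : ℝ) ≤ (n : ℝ) := by exact_mod_cast hn
  have hn0 : (n : ℝ) ≠ 0 := by linarith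
  have hn1 : (n : ℝ) - 1 ≠ 0 := by intro h; nlinarith
  have hn2 : (n : ℝ) - 2 ≠ 0 := by intro h; nlinarith
  have hr0 : ∀ i j, ric R i j = ric0 n R i j + lam n R * kd i j := by
    intro i j; unfold ric0; ring
  have hs0 : ∀ i j, ric0 n R i j = ric0 n R j i := by
    intro i j; unfold ric0; rw [ric_symm hR, kd_symm]
  have hkd_diag : (∑ i : Fin n, kd i i) = (n : ℝ) := by
    unfold kd; simp
  have hscal : scal R = (n : ℝ) * lam n R := by
    unfold lam; field_simp
  have htr0 : (∑ i, ric0 n R i i) = 0 := by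
    unfold ric0
    rw [Finset.sum_sub_distrib, ← Finset.mul_sum, hkd_diag]
    have : (∑ i, ric R i i) = scal R := rfl
    rw [this, hscal]; ring
  have hrr0 : (∑ i, ∑ k, ric R i k * ric0 n R i k) = norm2sq (ric0 n R) := by
    have e : ∀ i k, ric R i k * ric0 n R i k
        = ric0 n R i k * ric0 n R i k + lam n R * (kd i k * ric0 n R i k) := by
      intro i k; rw [hr0 i k]; ring
    calc (∑ i, ∑ k, ric R i k * ric0 n R i k)
        = ∑ i, ∑ k, (ric0 n R i k * ric0 n R i k
            + lam n R * (kd i k * ric0 n R i k)) :=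
          Finset.sum_congr rfl fun i _ => Finset.sum_congr rfl fun k _ => e i k
      _ = (∑ i, ∑ k, ric0 n R i k * ric0 n R i k)
            + ∑ i, ∑ k, lam n R * (kd i k * ric0 n R i k) := by
          rw [← Finset.sum_add_distrib]
          exact Finset.sum_congr rfl fun i _ => Finset.sum_add_distrib
      _ = norm2sq (ric0 n R) + lam n R * ∑ i, ric0 n R i i := by
          congr 1
          simp only [kd, mul_ite, ite_mul, mul_zero, zero_mul, mul_one, one_mul,
            Finset.sum_ite_eq, Finset.sum_ite_eq', Finset.mem_univ, if_true,
            ← Finset.mul_sum]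
      _ = norm2sq (ric0 n R) := by rw [htr0]; ring
  have htless : inner2 (ric0 n R) (tless n (matsq (ric0 n R)))
      = ∑ i, ∑ j, ∑ k, ric0 n R i j * (ric0 n R j k * ric0 n R k i) := by
    unfold inner2 tless matsq
    have e : ∀ i j, ric0 n R i j * ((∑ k, ric0 n R i k * ric0 n R k j)
          - ((∑ k, ∑ k', ric0 n R k k' * ric0 n R k' k) / n) * kd i j)
        = (∑ k, ric0 n R i j * (ric0 n R j k * ric0 n R k i))
          - ((∑ k, ∑ k', ric0 n R k k' * ric0 n R k' k) / n) * (kd i j * ric0 n R i j) := by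
      intro i j
      rw [mul_sub, Finset.mul_sum]
      congr 1
      · refine Finset.sum_congr rfl fun k _ => ?_
        rw [hs0 i k, hs0 k j]; ring
      · ring
    calc (∑ i, ∑ j, ric0 n R i j * ((∑ k, ric0 n R i k * ric0 n R k j)
          - ((∑ k, ∑ k', ric0 n R k k' * ric0 n R k' k) / n) * kd i j))
        = (∑ i, ∑ j, ∑ k, ric0 n R i j * (ric0 n R j k * ric0 n R k i))
          - ((∑ k, ∑ k', ric0 n R k k' * ric0 n R k' k) / n)
            * ∑ i, ∑ j, kd i j * ric0 n R i j := by
          rw [Finset.mul_sum, ← Finset.sum_sub_distrib]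
          refine Finset.sum_congr rfl fun i _ => ?_
          rw [Finset.mul_sum, ← Finset.sum_sub_distrib]
          exact Finset.sum_congr rfl fun j _ => e i j
      _ = ∑ i, ∑ j, ∑ k, ric0 n R i j * (ric0 n R j k * ric0 n R k i) := by
          have : (∑ i, ∑ j, kd i j * ric0 n R i j) = ∑ i, ric0 n R i i := by
            simp only [kd, ite_mul, one_mul, zero_mul,
              Finset.sum_ite_eq, Finset.sum_ite_eq', Finset.mem_univ, if_true]
          rw [this, htr0]; ring
  constructor
  · rw [part1 hR]
    exact (red R hR.2.1 (ric R)).symm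
  · rw [red R hR.2.1 (ric R), red (weyl n R) (weyl_alt hR) (ric0 n R)]
    have hL4 := L4 (R := R) (ric0 n R) (lam n R) (ric R) (fun i j => hr0 i j)
    have hL1 := L1 (R := R) (ric0 n R) (lam n R)
    have hL2 := L2 hR (ric0 n R) (lam n R)
    have hL3 := L3 (R := R) (lam n R)
    have hT1 := T1 (ric0 n R) hs0 htr0
    have hT2 := T2 (ric0 n R) hs0 htr0
    have hSW := SS_weyl (n := n) (R := R) (ric0 n R) (ric0 n R)
    rw [hL1, hrr0] at hL4
    have hrr0' : (∑ j, ∑ l, ric R j l * ric0 n R j l) = norm2sq (ric0 n R) := hrr0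
    rw [hL2, hrr0'] at hL4
    rw [hL3, hscal] at hL4
    rw [hT1, hT2] at hSW
    rw [hL4, hSW, htless]
    field_simp
    ring


end Work

end PaperStmt
end

section
/- If a > n/4 - 1/2, then every algebraic curvature operator R in the cone Ω(a) has positive Ricci curvature, where Ω(a) = {R : a‖R_{Ric₀}‖² + ((n-2+4a)/4)‖W‖² ≤ ((n-4a)/4)‖R_I‖², scal(R) > 0}. -/
open scoped BigOperators

namespace PaperStmt

noncomputable section Work

variable {N : Type*} [Fintype N] [DecidableEq N]

section Aux

variable {n : ℕ}

private theorem auxT1 (A B : Fin n → Fin n → ℝ) : (∑ i : Fin n, ∑ j : Fin n, ∑ k : Fin n, ∑ l : Fin n,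
    (A i k * kd j l) * (B i k * kd j l)) = n * ∑ i, ∑ j, A i j * B i j := by
  simp [kd, mul_ite, ite_mul, Finset.sum_ite_eq, Finset.sum_ite_eq', Finset.mul_sum,
    Finset.sum_mul]

private theorem auxT2 (A B : Fin n → Fin n → ℝ) : (∑ i : Fin n, ∑ j : Fin n, ∑ k : Fin n, ∑ l : Fin n,
    (kd i k * A j l) * (kd i k * B j l)) = n * ∑ i, ∑ j, A i j * B i j := by
  simp [kd, mul_ite, ite_mul, Finset.sum_ite_eq, Finset.sum_ite_eq', Finset.mul_sum,
    Finset.sum_mul]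

private theorem auxT3 (A B : Fin n → Fin n → ℝ) : (∑ i : Fin n, ∑ j : Fin n, ∑ k : Fin n, ∑ l : Fin n,
    (A i l * kd j k) * (B i l * kd j k)) = n * ∑ i, ∑ j, A i j * B i j := by
  simp [kd, mul_ite, ite_mul, Finset.sum_ite_eq, Finset.sum_ite_eq', Finset.mul_sum,
    Finset.sum_mul]

private theorem auxT4 (A B : Fin n → Fin n → ℝ) : (∑ i : Fin n, ∑ j : Fin n, ∑ k : Fin n, ∑ l : Fin n,
    (A j k * kd i l) * (B j k * kd i l)) = n * ∑ i, ∑ j, A i j * B i j := by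
  simp [kd, mul_ite, ite_mul, Finset.sum_ite_eq, Finset.sum_ite_eq', Finset.mul_sum,
    Finset.sum_mul]

private theorem auxC12 (A : Fin n → Fin n → ℝ) : (∑ i : Fin n, ∑ j : Fin n, ∑ k : Fin n, ∑ l : Fin n,
    (A i k * kd j l) * (kd i k * A j l)) = (∑ i, A i i)^2 := by
  simp [kd, mul_ite, ite_mul, Finset.sum_ite_eq, Finset.sum_ite_eq', Finset.mul_sum,
    Finset.sum_mul, pow_two]
  rw [Finset.sum_comm]

private theorem auxC13 (A : Fin n → Fin n → ℝ) : (∑ i : Fin n, ∑ j : Fin n, ∑ k : Fin n, ∑ l : Fin n,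
    (A i k * kd j l) * (A i l * kd j k)) = ∑ i, ∑ j, A i j * A i j := by
  simp [kd, mul_ite, ite_mul, Finset.sum_ite_eq, Finset.sum_ite_eq']

private theorem auxC14 (A : Fin n → Fin n → ℝ) : (∑ i : Fin n, ∑ j : Fin n, ∑ k : Fin n, ∑ l : Fin n,
    (A i k * kd j l) * (A j k * kd i l)) = ∑ i, ∑ j, A i j * A i j := by
  simp [kd, mul_ite, ite_mul, Finset.sum_ite_eq, Finset.sum_ite_eq']

private theorem auxC23 (A : Fin n → Fin n → ℝ) : (∑ i : Fin n, ∑ j : Fin n, ∑ k : Fin n, ∑ l : Fin n,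
    (kd i k * A j l) * (A i l * kd j k)) = ∑ i, ∑ j, A i j * A i j := by
  simp [kd, mul_ite, ite_mul, Finset.sum_ite_eq, Finset.sum_ite_eq']

private theorem auxC24 (A : Fin n → Fin n → ℝ) : (∑ i : Fin n, ∑ j : Fin n, ∑ k : Fin n, ∑ l : Fin n,
    (kd i k * A j l) * (A j k * kd i l)) = ∑ i, ∑ j, A i j * A i j := by
  simp [kd, mul_ite, ite_mul, Finset.sum_ite_eq, Finset.sum_ite_eq']
  rw [Finset.sum_comm]

private theorem auxC34 (A : Fin n → Fin n → ℝ) : (∑ i : Fin n, ∑ j : Fin n, ∑ k : Fin n, ∑ l : Fin n,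
    (A i l * kd j k) * (A j k * kd i l)) = (∑ i, A i i)^2 := by
  simp [kd, mul_ite, ite_mul, Finset.sum_ite_eq, Finset.sum_ite_eq', Finset.mul_sum,
    Finset.sum_mul, pow_two]
  rw [Finset.sum_comm]

private theorem auxSw (A : Fin n → Fin n → ℝ) : (∑ i : Fin n, ∑ j : Fin n, ∑ k : Fin n, ∑ l : Fin n,
    (A i k * kd j l + kd i k * A j l - A i l * kd j k - A j k * kd i l)^2)
    = (4*(n:ℝ) - 8) * (∑ i, ∑ j, A i j * A i j) + 4 * (∑ i, A i i)^2 := by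
  have expand : ∀ i j k l : Fin n,
      (A i k * kd j l + kd i k * A j l - A i l * kd j k - A j k * kd i l)^2
      = (A i k * kd j l) * (A i k * kd j l) + (kd i k * A j l) * (kd i k * A j l)
        + (A i l * kd j k) * (A i l * kd j k) + (A j k * kd i l) * (A j k * kd i l)
        + 2 * ((A i k * kd j l) * (kd i k * A j l))
        - 2 * ((A i k * kd j l) * (A i l * kd j k))
        - 2 * ((A i k * kd j l) * (A j k * kd i l))
        - 2 * ((kd i k * A j l) * (A i l * kd j k))
        - 2 * ((kd i k * A j l) * (A j k * kd i l))
        + 2 * ((A i l * kd j k) * (A j k * kd i l)) := by intros; ring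
  simp only [expand, Finset.sum_add_distrib, Finset.sum_sub_distrib, ← Finset.mul_sum]
  rw [auxT1 A A, auxT2 A A, auxT3 A A, auxT4 A A, auxC12 A, auxC13 A, auxC14 A, auxC23 A,
    auxC24 A, auxC34 A]
  ring

private theorem auxKD4 : (∑ i : Fin n, ∑ j : Fin n, ∑ k : Fin n, ∑ l : Fin n,
    (kd i k * kd j l - kd i l * kd j k)^2) = 2*(n:ℝ)^2 - 2*(n:ℝ) := by
  simp only [kd, sub_sq, mul_pow, mul_ite, ite_mul, mul_one, one_mul, mul_zero, zero_mul,
    Finset.sum_add_distrib, Finset.sum_sub_distrib, ite_pow, one_pow, zero_pow]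
  simp [Finset.sum_ite_eq, Finset.sum_ite_eq', Finset.mul_sum, Finset.sum_mul, mul_ite, ite_mul]
  ring

private theorem aux_normRI (R : Fin n → Fin n → Fin n → Fin n → ℝ) :
    norm4sq (RI n R) = (lam n R / ((n:ℝ)-1))^2 * (2*(n:ℝ)^2 - 2*(n:ℝ)) / 4 := by
  have hw : ∀ i j k l : Fin n, RI n R i j k l * RI n R i j k l
      = (lam n R / ((n:ℝ)-1))^2 * (kd i k * kd j l - kd i l * kd j k)^2 := by
    intro i j k l; simp only [RI, wedge]; ring
  simp only [norm4sq, inner4, hw, ← Finset.mul_sum]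
  rw [auxKD4]
  ring

private theorem aux_normRR (R : Fin n → Fin n → Fin n → Fin n → ℝ) :
    norm4sq (RRic0 n R) = (2/((n:ℝ)-2))^2 / 16 *
      ((4*(n:ℝ) - 8) * (∑ i, ∑ j, ric0 n R i j * ric0 n R i j)
        + 4 * (∑ i, ric0 n R i i)^2) := by
  have hw : ∀ i j k l : Fin n, RRic0 n R i j k l * RRic0 n R i j k l
      = (2/((n:ℝ)-2))^2 / 4 *
        (ric0 n R i k * kd j l + kd i k * ric0 n R j l - ric0 n R i l * kd j k
          - ric0 n R j k * kd i l)^2 := by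
    intro i j k l; simp only [RRic0, wedge]; ring
  simp only [norm4sq, inner4, hw, ← Finset.mul_sum]
  rw [auxSw (ric0 n R)]
  ring

private theorem aux_w_nonneg (X : Fin n → Fin n → Fin n → Fin n → ℝ) : 0 ≤ norm4sq X := by
  unfold norm4sq inner4
  have : 0 ≤ ∑ i : Fin n, ∑ j : Fin n, ∑ k : Fin n, ∑ l : Fin n, X i j k l * X i j k l := by
    refine Finset.sum_nonneg fun i _ => Finset.sum_nonneg fun j _ =>
      Finset.sum_nonneg fun k _ => Finset.sum_nonneg fun l _ => mul_self_nonneg _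
  linarith

private theorem aux_tr0 (hn : (n:ℝ) ≠ 0) (R : Fin n → Fin n → Fin n → Fin n → ℝ) :
    ∑ i, ric0 n R i i = 0 := by
  have h : ∑ i, ric R i i = scal R := rfl
  simp only [ric0, kd, if_pos rfl, mul_one, Finset.sum_sub_distrib, h, lam,
    Finset.sum_const, Finset.card_univ, Fintype.card_fin, nsmul_eq_mul]
  field_simp
  simp

end Aux

set_option maxHeartbeats 1600000 in
/-- If `a > n/4 - 1/2`, every algebraic curvature operator in the cone `Ω(a)`
has positive Ricci curvature. -/
theorem stmt9 {n : ℕ} (hn : 4 ≤ n) (a : ℝ) (ha : a > (n : ℝ) / 4 - 1 / 2)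
    (R : Fin n → Fin n → Fin n → Fin n → ℝ) (hR : IsCurvOp R)
    (hscal : 0 < scal R)
    (hcone : a * norm4sq (RRic0 n R) + (((n : ℝ) - 2 + 4 * a) / 4) * norm4sq (weyl n R)
      ≤ (((n : ℝ) - 4 * a) / 4) * norm4sq (RI n R)) :
    ∀ v : Fin n → ℝ, v ≠ 0 → 0 < ∑ i, ∑ j, ric R i j * v i * v j := by
  intro v hv
  have hn0 : (0:ℝ) < (n:ℝ) := by
    have : (4:ℝ) ≤ (n:ℝ) := by exact_mod_cast hn
    linarith
  have hn1 : (0:ℝ) < (n:ℝ) - 1 := by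
    have : (4:ℝ) ≤ (n:ℝ) := by exact_mod_cast hn
    linarith
  have hn2 : (0:ℝ) < (n:ℝ) - 2 := by
    have : (4:ℝ) ≤ (n:ℝ) := by exact_mod_cast hn
    linarith
  have ha0 : (0:ℝ) < a := by
    have : (4:ℝ) ≤ (n:ℝ) := by exact_mod_cast hn
    nlinarith
  set L : ℝ := lam n R with hL
  have hLpos : 0 < L := div_pos hscal hn0
  set A : Fin n → Fin n → ℝ := ric0 n R with hA
  set a2 : ℝ := ∑ i, ∑ j, A i j * A i j with ha2
  set s : ℝ := ∑ i, v i * v i with hs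
  set t : ℝ := ∑ i, ∑ j, A i j * v i * v j with htdef
  have htr : ∑ i, A i i = 0 := aux_tr0 (ne_of_gt hn0) R
  have hspos : 0 < s := by
    obtain ⟨i, hi⟩ := Function.ne_iff.mp hv
    exact Finset.sum_pos' (fun j _ => mul_self_nonneg _)
      ⟨i, Finset.mem_univ i, mul_self_pos.mpr hi⟩
  -- the cone inequality gives a bound on a2
  have e1 : norm4sq (RRic0 n R) = a2 / ((n:ℝ) - 2) := by
    rw [aux_normRR R, htr]
    field_simp
    simp only [ha2, hA, pow_two]
    ring
  have e2 : norm4sq (RI n R) = (n:ℝ) * L^2 / (2*((n:ℝ)-1)) := by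
    rw [aux_normRI R]
    field_simp
    ring
  have hw0 : 0 ≤ norm4sq (weyl n R) := aux_w_nonneg _
  have hcw : 0 ≤ (((n : ℝ) - 2 + 4 * a) / 4) := by nlinarith
  have hcone' : a * (a2 / ((n:ℝ) - 2)) ≤ (((n : ℝ) - 4 * a) / 4) * ((n:ℝ) * L^2 / (2*((n:ℝ)-1))) := by
    rw [← e1, ← e2]
    nlinarith [mul_nonneg hcw hw0]
  have hn1e : ((n:ℝ)-1) ≠ 0 := ne_of_gt hn1
  have hn2e : ((n:ℝ)-2) ≠ 0 := ne_of_gt hn2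
  have key : 8*a*((n:ℝ)-1)*a2 ≤ (n:ℝ)*((n:ℝ)-2)*((n:ℝ)-4*a)*L^2 := by
    have h := mul_le_mul_of_nonneg_left hcone'
      (show (0:ℝ) ≤ 8*((n:ℝ)-1)*((n:ℝ)-2) by positivity)
    have e : 8*((n:ℝ)-1)*((n:ℝ)-2) * (a * (a2/((n:ℝ)-2))) = 8*a*((n:ℝ)-1)*a2 := by
      field_simp
    have e' : 8*((n:ℝ)-1)*((n:ℝ)-2) * ((((n : ℝ) - 4 * a) / 4) * ((n:ℝ) * L^2 / (2*((n:ℝ)-1))))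
        = (n:ℝ)*((n:ℝ)-2)*((n:ℝ)-4*a)*L^2 := by
      field_simp; ring
    rw [e, e'] at h
    exact h
  -- Cauchy-Schwarz with B i j = n * v i * v j - s * kd i j
  set B : Fin n → Fin n → ℝ := fun i j => (n:ℝ) * v i * v j - s * kd i j with hB
  have hAB : ∑ i, ∑ j, A i j * B i j = (n:ℝ) * t := by
    have hpt : ∀ i j : Fin n, A i j * B i j
        = (n:ℝ) * (A i j * v i * v j) - s * (A i j * kd i j) := by
      intro i j; simp only [hB]; ring
    simp only [hpt, Finset.sum_sub_distrib, ← Finset.mul_sum]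
    have h1 : ∑ i, ∑ j, A i j * kd i j = ∑ i, A i i := by
      simp [kd, mul_ite, Finset.sum_ite_eq, Finset.sum_ite_eq']
    rw [h1, htr]
    simp [htdef]
  have hBB : ∑ i, ∑ j, B i j * B i j = ((n:ℝ)^2 - (n:ℝ)) * s^2 := by
    have hpt : ∀ i j : Fin n, B i j * B i j
        = (n:ℝ)^2 * ((v i * v i) * (v j * v j))
          - 2*(n:ℝ)*s * (v i * v j * kd i j) + s^2 * (kd i j * kd i j) := by
      intro i j; simp only [hB]; ring
    have h1 : ∑ i : Fin n, ∑ j, v i * v j * kd i j = s := by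
      simp [kd, mul_ite, Finset.sum_ite_eq, Finset.sum_ite_eq', hs]
    have h2 : ∑ i : Fin n, ∑ j, kd i j * kd i j = (n:ℝ) := by
      simp [kd, mul_ite, Finset.sum_ite_eq, Finset.sum_ite_eq']
    have h3 : ∑ i : Fin n, ∑ j, (v i * v i) * (v j * v j) = s^2 := by
      calc ∑ i : Fin n, ∑ j, (v i * v i) * (v j * v j)
          = (∑ i, v i * v i) * (∑ j, v j * v j) := (Finset.sum_mul_sum _ _ _ _).symm
        _ = s^2 := by rw [hs]; ring
    calc ∑ i, ∑ j, B i j * B i j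
        = ∑ i : Fin n, ∑ j, ((n:ℝ)^2 * ((v i * v i) * (v j * v j))
            - 2*(n:ℝ)*s * (v i * v j * kd i j) + s^2 * (kd i j * kd i j)) := by
          simp only [hpt]
      _ = (n:ℝ)^2 * (∑ i : Fin n, ∑ j, (v i * v i) * (v j * v j))
            - 2*(n:ℝ)*s * (∑ i : Fin n, ∑ j, v i * v j * kd i j)
            + s^2 * (∑ i : Fin n, ∑ j, kd i j * kd i j) := by
          simp only [Finset.sum_add_distrib, Finset.sum_sub_distrib, ← Finset.mul_sum]
      _ = ((n:ℝ)^2 - (n:ℝ)) * s^2 := by rw [h1, h2, h3]; ring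
  have hCS : ((n:ℝ) * t)^2 ≤ a2 * (((n:ℝ)^2 - (n:ℝ)) * s^2) := by
    have hCS0 := Finset.sum_mul_sq_le_sq_mul_sq Finset.univ
      (fun p : Fin n × Fin n => A p.1 p.2) (fun p : Fin n × Fin n => B p.1 p.2)
    have eAB : (∑ p : Fin n × Fin n, A p.1 p.2 * B p.1 p.2) = (n:ℝ)*t := by
      rw [Fintype.sum_prod_type]; exact hAB
    have eA : (∑ p : Fin n × Fin n, (A p.1 p.2)^2) = a2 := by
      rw [Fintype.sum_prod_type]
      calc ∑ x : Fin n, ∑ y : Fin n, (A x y)^2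
          = ∑ x : Fin n, ∑ y : Fin n, A x y * A x y :=
            Finset.sum_congr rfl fun x _ => Finset.sum_congr rfl fun y _ => pow_two _
        _ = a2 := ha2.symm
    have eB : (∑ p : Fin n × Fin n, (B p.1 p.2)^2) = ((n:ℝ)^2 - (n:ℝ)) * s^2 := by
      rw [Fintype.sum_prod_type]
      calc ∑ x : Fin n, ∑ y : Fin n, (B x y)^2
          = ∑ x : Fin n, ∑ y : Fin n, B x y * B x y :=
            Finset.sum_congr rfl fun x _ => Finset.sum_congr rfl fun y _ => pow_two _
        _ = ((n:ℝ)^2 - (n:ℝ)) * s^2 := hBB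
    rw [eAB, eA, eB] at hCS0
    exact hCS0
  -- combine everything
  have hgoal : ∑ i, ∑ j, ric R i j * v i * v j = L * s + t := by
    have hpt : ∀ i j : Fin n, ric R i j * v i * v j
        = L * (v i * v j * kd i j) + A i j * v i * v j := by
      intro i j
      have : ric R i j = A i j + L * kd i j := by simp [hA, ric0, hL]
      rw [this]; ring
    simp only [hpt, Finset.sum_add_distrib, ← Finset.mul_sum]
    have h1 : ∑ i : Fin n, ∑ j, v i * v j * kd i j = s := by
      simp [kd, mul_ite, Finset.sum_ite_eq, Finset.sum_ite_eq', hs]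
    rw [h1, ← htdef]
  clear_value L A a2 s t B
  rw [hgoal]
  have hlt : ((n:ℝ)-2)*((n:ℝ)-4*a) < 8*a := by nlinarith
  have k1 : 8*a*((n:ℝ)-1)*(((n:ℝ)*t)^2) ≤ 8*a*((n:ℝ)-1)*(a2 * (((n:ℝ)^2 - (n:ℝ)) * s^2)) :=
    mul_le_mul_of_nonneg_left hCS (by positivity)
  have k2 : (8*a*((n:ℝ)-1)*a2) * (((n:ℝ)^2 - (n:ℝ)) * s^2)
      ≤ ((n:ℝ)*((n:ℝ)-2)*((n:ℝ)-4*a)*L^2) * (((n:ℝ)^2 - (n:ℝ)) * s^2) := by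
    apply mul_le_mul_of_nonneg_right key
    exact mul_nonneg (by nlinarith) (sq_nonneg s)
  have ht2 : t^2 < (L*s)^2 := by
    have hbig : 8*a*((n:ℝ)^2*((n:ℝ)-1))*t^2
        ≤ ((n:ℝ)^2*((n:ℝ)-1))*(((n:ℝ)-2)*((n:ℝ)-4*a)*L^2*s^2) := by linarith [k1, k2]
    have hsmall : ((n:ℝ)-2)*((n:ℝ)-4*a)*L^2*s^2 < 8*a*L^2*s^2 := by
      have hpos : 0 < L^2*s^2 := by positivity
      nlinarith
    have hC : (0:ℝ) < (n:ℝ)^2*((n:ℝ)-1) := by positivity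
    have hpos8 : (0:ℝ) < 8*a*((n:ℝ)^2*((n:ℝ)-1)) := by positivity
    have h1 : 8*a*((n:ℝ)^2*((n:ℝ)-1))*t^2 < 8*a*((n:ℝ)^2*((n:ℝ)-1))*((L*s)^2) := by
      nlinarith [mul_lt_mul_of_pos_left hsmall hC]
    exact (mul_lt_mul_iff_right₀ hpos8).mp h1
  nlinarith [ht2, mul_pos hLpos hspos, sq_nonneg (L*s + t)]

end Work

end PaperStmt
end

section
/- For n ≥ 11 and a = n/4 - 1/n, the quantity 1/2 - (1/8 + (12a+n-2)²/(128(n-2+4a)a))·((n-2)(n-4a)/a) equals ((n+1)(n+2)(n-10)-2)/(2(n+1)(n+2)²) and is strictly positive. -/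
/-!
Substituting `a = (n - 2)(n + 2)/(4n)` turns every factor of the coefficient into a product of
linear factors over `n`: `n - 4a = 4/n`, `n - 2 + 4a = 2(n + 1)(n - 2)/n` and
`12a + n - 2 = 2(2n + 3)(n - 2)/n`. The factors `n - 2` cancel, leaving
`1/2 - 2/(n + 2) - (2n + 3)²/((n + 1)(n + 2)²)`, whose numerator over the common denominator is
`(n + 1)(n + 2)(n - 10) - 2`; this is positive as soon as `n ≥ 11`.
-/

namespace BohmWilking

variable {x a : ℝ}

section Substitution

variable (hx : x ≠ 0) (ha : a = x / 4 - 1 / x)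
include hx ha

lemma eq_mul_div : a = (x - 2) * (x + 2) / (4 * x) := by
  rw [ha]; field_simp; ring

lemma sub_four_mul_eq : x - 4 * a = 4 / x := by
  rw [ha]; field_simp; ring

lemma sub_two_add_four_mul_eq : x - 2 + 4 * a = 2 * (x + 1) * (x - 2) / x := by
  rw [ha]; field_simp; ring

lemma twelve_mul_add_sub_two_eq : 12 * a + x - 2 = 2 * (2 * x + 3) * (x - 2) / x := by
  rw [ha]; field_simp; ring

end Substitution

lemma coeff_eq (hx : 2 < x) (ha : a = x / 4 - 1 / x) :
    1 / 2 - (1 / 8 + (12 * a + x - 2) ^ 2 / (128 * (x - 2 + 4 * a) * a)) *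
        ((x - 2) * (x - 4 * a) / a)
      = ((x + 1) * (x + 2) * (x - 10) - 2) / (2 * (x + 1) * (x + 2) ^ 2) := by
  have hx0 : x ≠ 0 := by positivity
  have hxm2 : x - 2 ≠ 0 := by linarith
  have hxp1 : x + 1 ≠ 0 := by positivity
  have hxp2 : x + 2 ≠ 0 := by positivity
  have hquot : (12 * a + x - 2) ^ 2 / (128 * (x - 2 + 4 * a) * a)
      = (2 * x + 3) ^ 2 / (16 * (x + 1) * (x + 2)) := by
    rw [twelve_mul_add_sub_two_eq hx0 ha, sub_two_add_four_mul_eq hx0 ha, eq_mul_div hx0 ha]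
    field_simp
    ring
  have hfactor : (x - 2) * (x - 4 * a) / a = 16 / (x + 2) := by
    rw [sub_four_mul_eq hx0 ha, eq_mul_div hx0 ha]
    field_simp
    norm_num
  rw [hquot, hfactor]
  field_simp
  ring

lemma coeff_pos (hx : 11 ≤ x) :
    0 < ((x + 1) * (x + 2) * (x - 10) - 2) / (2 * (x + 1) * (x + 2) ^ 2) := by
  have hprod : 156 ≤ (x + 1) * (x + 2) := by nlinarith
  have hnum : 0 < (x + 1) * (x + 2) * (x - 10) - 2 := by nlinarith
  positivity

end BohmWilking

open BohmWilking in
/-- For `n ≥ 11` and `a = n/4 - 1/n`, the key coefficient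
`1/2 - (1/8 + (12a+n-2)²/(128(n-2+4a)a))·((n-2)(n-4a)/a)` equals
`((n+1)(n+2)(n-10)-2)/(2(n+1)(n+2)²)` and is strictly positive. -/
theorem stmt11 (n : ℕ) (hn : 11 ≤ n) (a : ℝ) (ha : a = (n : ℝ) / 4 - 1 / n) :
    1 / 2 - (1 / 8 + (12 * a + (n : ℝ) - 2) ^ 2 / (128 * ((n : ℝ) - 2 + 4 * a) * a)) *
        (((n : ℝ) - 2) * ((n : ℝ) - 4 * a) / a)
      = (((n : ℝ) + 1) * ((n : ℝ) + 2) * ((n : ℝ) - 10) - 2) /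
          (2 * ((n : ℝ) + 1) * ((n : ℝ) + 2) ^ 2) ∧
    0 < (((n : ℝ) + 1) * ((n : ℝ) + 2) * ((n : ℝ) - 10) - 2) /
          (2 * ((n : ℝ) + 1) * ((n : ℝ) + 2) ^ 2) := by
  have hx : (11 : ℝ) ≤ n := by exact_mod_cast hn
  exact ⟨coeff_eq (by linarith) ha, coeff_pos hx⟩
end

section
/- For n ≥ 4, the function a ↦ 1/2 - (1/8 + (12a+n-2)²/(128(n-2+4a)a))·((n-2)(n-4a)/a) is strictly increasing in a on (0, n/4]. -/
/-!
For fixed `m > 2` the map is in fact strictly increasing on all of `(0, ∞)`: clearing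
denominators, `F m b - F m a` is `(b - a) (m - 2)` times a polynomial in `a, b` whose
coefficients are positive polynomials in `c = m - 2`, over a positive denominator.
On the diagonal `b = a` this polynomial is `2a` times the bracket of the derivative.
-/

noncomputable def F (m a : ℝ) : ℝ :=
  1 / 2 - (1 / 8 + (12 * a + m - 2) ^ 2 / (128 * (m - 2 + 4 * a) * a)) * ((m - 2) * (m - 4 * a) / a)

def slopeNumerator (c a b : ℝ) : ℝ :=
  (c + 2) * c ^ 3 * (a + b) + 4 * (c + 2) * c ^ 2 * (a ^ 2 + b ^ 2)
    + 8 * a * b * c ^ 2 * (5 * c + 11) + 16 * a * b * c * (9 * c + 20) * (a + b)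
    + 128 * a ^ 2 * b ^ 2 * (8 * c + 13)

lemma slopeNumerator_pos {c a b : ℝ} (hc : 0 < c) (ha : 0 < a) (hb : 0 < b) :
    0 < slopeNumerator c a b := by
  unfold slopeNumerator
  positivity

lemma F_sub_F {c a b : ℝ} (hc : 0 < c) (ha : 0 < a) (hb : 0 < b) :
    F (c + 2) b - F (c + 2) a = (b - a) * c * slopeNumerator c a b /
      (128 * a ^ 2 * b ^ 2 * (c + 4 * a) * (c + 4 * b)) := by
  simp only [F, slopeNumerator, add_sub_cancel_right]
  field_simp
  ring

lemma F_strictMonoOn {m : ℝ} (hm : 2 < m) : StrictMonoOn (F m) (Set.Ioi 0) := by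
  obtain ⟨c, hc, rfl⟩ : ∃ c, 0 < c ∧ m = c + 2 := ⟨m - 2, by linarith, by ring⟩
  intro a (ha : 0 < a) b (hb : 0 < b) hab
  rw [← sub_pos, F_sub_F hc ha hb]
  have := slopeNumerator_pos hc ha hb
  have : 0 < b - a := sub_pos.2 hab
  positivity

/-- For `n ≥ 4`, the map
`a ↦ 1/2 - (1/8 + (12a+n-2)²/(128(n-2+4a)a))·((n-2)(n-4a)/a)`
is strictly increasing on `(0, n/4]`. -/
theorem stmt12 (n : ℕ) (hn : 4 ≤ n) :
    StrictMonoOn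
      (fun a : ℝ =>
        1 / 2 - (1 / 8 + (12 * a + (n : ℝ) - 2) ^ 2 / (128 * ((n : ℝ) - 2 + 4 * a) * a)) *
          (((n : ℝ) - 2) * ((n : ℝ) - 4 * a) / a))
      (Set.Ioc 0 ((n : ℝ) / 4)) := by
  have hm : (2 : ℝ) < n := by
    have : (4 : ℝ) ≤ n := by exact_mod_cast hn
    linarith
  exact (F_strictMonoOn hm).mono Set.Ioc_subset_Ioi_self
end

section
/- Let K be an algebraic Kähler curvature operator on ℝ^{2m} and R the algebraic curvature operator on ℝ^{2m+1} defined by R_{ijkl} = K_{ijkl} - (τ²/4)(2J_{ij}J_{kl} + J_{ik}J_{jl} - J_{il}J_{jk}), R_{ijk0} = 0, R_{i0j0} = (τ²/4)δ_{ij} (indices 1..2m horizontal, index 0 vertical). Then ‖R‖² = ‖K‖² - (3/2)mτ²λ̄ + ((6m²+5m)/16)τ⁴, where λ̄ = scal(K)/(2m). -/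
open scoped BigOperators

namespace PaperStmt

noncomputable section Work

variable {N : Type*} [Fintype N] [DecidableEq N]

/-- Kähler structure hypotheses: `K` is an algebraic curvature operator on ℝ^{2m},
`J` is an orthogonal almost-complex structure, and `K` is invariant under `J`. -/
def IsKael (m : ℕ) (K : Fin (2*m) → Fin (2*m) → Fin (2*m) → Fin (2*m) → ℝ)
    (J : Fin (2*m) → Fin (2*m) → ℝ) : Prop :=
  IsCurvOp K ∧ (∀ i j, J j i = - J i j) ∧ (∀ i j, (∑ k, J i k * J j k) = kd i j) ∧
  (∀ i j k l, K i j k l = ∑ p, ∑ q, J p i * J q j * K p q k l)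

/-- The circle-bundle curvature operator on ℝ^{2m+1} associated to a Kähler
curvature operator `K`: horizontal indices are `Sum.inl i` (for `i : Fin (2m)`),
the vertical index is `Sum.inr ()`. -/
def Rb (m : ℕ) (K : Fin (2*m) → Fin (2*m) → Fin (2*m) → Fin (2*m) → ℝ)
    (J : Fin (2*m) → Fin (2*m) → ℝ) (τ : ℝ) :
    (Fin (2*m) ⊕ Unit) → (Fin (2*m) ⊕ Unit) → (Fin (2*m) ⊕ Unit) → (Fin (2*m) ⊕ Unit) → ℝ
  | Sum.inl i, Sum.inl j, Sum.inl k, Sum.inl l =>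
      K i j k l - (τ^2/4) * (2 * J i j * J k l + J i k * J j l - J i l * J j k)
  | Sum.inl i, Sum.inr _, Sum.inl k, Sum.inr _ => (τ^2/4) * kd i k
  | Sum.inl i, Sum.inr _, Sum.inr _, Sum.inl l => -((τ^2/4) * kd i l)
  | Sum.inr _, Sum.inl j, Sum.inl k, Sum.inr _ => -((τ^2/4) * kd j k)
  | Sum.inr _, Sum.inl j, Sum.inr _, Sum.inl l => (τ^2/4) * kd j l
  | _, _, _, _ => 0

/-- λ̄ = scal(K)/(2m) for a Kähler curvature operator on ℝ^{2m}. -/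
def lamK (m : ℕ) (K : Fin (2*m) → Fin (2*m) → Fin (2*m) → Fin (2*m) → ℝ) : ℝ :=
  scal K / (2 * (m : ℝ))

/-- ‖K_E‖² = (2m/(m+1)) λ̄². -/
def nKE (m : ℕ) (K : Fin (2*m) → Fin (2*m) → Fin (2*m) → Fin (2*m) → ℝ) : ℝ :=
  (2 * (m : ℝ) / ((m : ℝ) + 1)) * (lamK m K) ^ 2

/-- ‖K_{Ric₀}‖² = (4/(m+2)) |Ric(K)₀|_K² = (2/(m+2)) |Ric(K)₀|². -/
def nKRic0 (m : ℕ) (K : Fin (2*m) → Fin (2*m) → Fin (2*m) → Fin (2*m) → ℝ) : ℝ :=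
  (2 / ((m : ℝ) + 2)) * norm2sq (ric0 (2*m) K)

/-- ‖B‖², the squared norm of the Bochner–Weyl part of `K`, via orthogonality
of the U(m)-decomposition. -/
def nB (m : ℕ) (K : Fin (2*m) → Fin (2*m) → Fin (2*m) → Fin (2*m) → ℝ) : ℝ :=
  norm4sq K - nKE m K - nKRic0 m K

end Work

/-! Expanding the square, the vertical components of `Rb` contribute `m τ⁴ / 8`, and the horizontal
block is `K - (τ²/4) T` with `T_{ijkl} = 2 J_{ij} J_{kl} + J_{ik} J_{jl} - J_{il} J_{jk}`.
The `J`-invariance of `K` says precisely that `Σ_{ij} J_{ik} J_{jl} K_{ijkl} = K_{klkl}`, so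
`Σ K_{ijkl} J_{ik} J_{jl} = scal K` and, swapping `k, l`, `Σ K_{ijkl} J_{il} J_{jk} = -scal K`;
the Bianchi identity turns `Σ K_{ijkl} J_{ij} J_{kl}` into the difference of the two, `2 scal K`.
Hence `⟨K, T⟩ = (3/2) scal K`, while orthogonality of `J` gives `‖T‖² = (3/2)(n² + n)`, `n = 2m`. -/

section CircleBundle

variable {N : Type*} [Fintype N] {K : N → N → N → N → ℝ} {J : N → N → ℝ}

lemma sum_comm₃ {M : Type*} [AddCommMonoid M] (f : N → N → N → M) :
    ∑ i, ∑ j, ∑ k, f i j k = ∑ j, ∑ k, ∑ i, f i j k := by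
  rw [Finset.sum_comm]
  exact Finset.sum_congr rfl fun _ _ => Finset.sum_comm

lemma norm4sq_sub_mul (X Y : N → N → N → N → ℝ) (c : ℝ) :
    norm4sq (fun i j k l => X i j k l - c * Y i j k l)
      = norm4sq X - 2 * c * inner4 X Y + c ^ 2 * norm4sq Y := by
  simp only [norm4sq, inner4, Finset.mul_sum, ← Finset.sum_sub_distrib, ← Finset.sum_add_distrib]
  congr! 4
  ring

lemma sum_K_mul_J13_J24
    (hinv : ∀ i j k l, K i j k l = ∑ p, ∑ q, J p i * J q j * K p q k l) :
    ∑ i, ∑ j, ∑ k, ∑ l, K i j k l * (J i k * J j l) = scal K := by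
  calc ∑ i, ∑ j, ∑ k, ∑ l, K i j k l * (J i k * J j l)
      = ∑ k, ∑ l, ∑ i, ∑ j, J i k * J j l * K i j k l := by
        rw [Finset.sum_congr rfl fun i _ => sum_comm₃ _, sum_comm₃]
        simp only [mul_comm (K _ _ _ _)]
    _ = scal K := by simp only [← hinv]; rfl

lemma sum_K_mul_J14_J23 (hb : ∀ i j k l, K i j l k = - K i j k l)
    (hinv : ∀ i j k l, K i j k l = ∑ p, ∑ q, J p i * J q j * K p q k l) :
    ∑ i, ∑ j, ∑ k, ∑ l, K i j k l * (J i l * J j k) = - scal K := by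
  rw [← sum_K_mul_J13_J24 hinv]
  simp only [← Finset.sum_neg_distrib]
  refine Finset.sum_congr rfl fun i _ => Finset.sum_congr rfl fun j _ => ?_
  rw [Finset.sum_comm]
  congr! 2 with k - l -
  rw [hb]
  ring

lemma sum_K_mul_J12_J34 (hb : ∀ i j k l, K i j l k = - K i j k l)
    (hbi : ∀ i j k l, K i j k l + K j k i l + K k i j l = 0)
    (hJa : ∀ i j, J j i = - J i j)
    (hinv : ∀ i j k l, K i j k l = ∑ p, ∑ q, J p i * J q j * K p q k l) :
    ∑ i, ∑ j, ∑ k, ∑ l, K i j k l * (J i j * J k l) = 2 * scal K := by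
  have h₁ : ∑ i, ∑ j, ∑ k, ∑ l, K j k i l * (J i j * J k l) = - scal K := by
    rw [sum_comm₃, ← sum_K_mul_J13_J24 hinv]
    simp only [← Finset.sum_neg_distrib]
    congr! 4
    rw [hJa]
    ring
  have h₂ : ∑ i, ∑ j, ∑ k, ∑ l, K k i j l * (J i j * J k l) = - scal K := by
    rw [← sum_K_mul_J14_J23 hb hinv, ← sum_comm₃]
    congr! 4
    ring
  calc ∑ i, ∑ j, ∑ k, ∑ l, K i j k l * (J i j * J k l)
      = ∑ i, ∑ j, ∑ k, ∑ l, (-(K j k i l * (J i j * J k l)) - K k i j l * (J i j * J k l)) := by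
        congr! 4 with i - j - k - l -
        linear_combination (J i j * J k l) * hbi i j k l
    _ = 2 * scal K := by
        simp only [Finset.sum_sub_distrib, Finset.sum_neg_distrib, h₁, h₂]
        ring

def jTensor (J : N → N → ℝ) (i j k l : N) : ℝ :=
  2 * J i j * J k l + J i k * J j l - J i l * J j k

lemma inner4_jTensor (hb : ∀ i j k l, K i j l k = - K i j k l)
    (hbi : ∀ i j k l, K i j k l + K j k i l + K k i j l = 0)
    (hJa : ∀ i j, J j i = - J i j)
    (hinv : ∀ i j k l, K i j k l = ∑ p, ∑ q, J p i * J q j * K p q k l) :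
    inner4 K (jTensor J) = 3 / 2 * scal K := by
  have hexp : ∀ i j k l, K i j k l * jTensor J i j k l = 2 * (K i j k l * (J i j * J k l))
      + K i j k l * (J i k * J j l) - K i j k l * (J i l * J j k) := by
    intros; unfold jTensor; ring
  simp only [inner4, hexp, Finset.sum_add_distrib, Finset.sum_sub_distrib, ← Finset.mul_sum,
    sum_K_mul_J12_J34 hb hbi hJa hinv, sum_K_mul_J13_J24 hinv, sum_K_mul_J14_J23 hb hinv]
  ring

variable [DecidableEq N]

lemma sum_mul_kd (a : N) (f : N → ℝ) : ∑ p, f p * kd p a = f a := by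
  simp [kd]

section Orthogonal

variable (hJ : ∀ i j, ∑ k, J i k * J j k = kd i j)
include hJ

lemma sum_J_sq_row (i : N) : ∑ k, J i k * J i k = 1 := by
  simp [hJ, kd]

lemma sum_J_mul_J (hJa : ∀ i j, J j i = - J i j) (i j : N) : ∑ k, J i k * J k j = - kd i j := by
  simp only [← hJ, hJa j, mul_neg, Finset.sum_neg_distrib]

lemma sum_J12_J34_sq :
    ∑ i, ∑ j, ∑ k, ∑ l, (J i j * J k l) * (J i j * J k l) = Fintype.card N ^ 2 := by
  simp [← Finset.mul_sum, sum_J_sq_row hJ, mul_mul_mul_comm, sq]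

lemma sum_J13_J24_sq :
    ∑ i, ∑ j, ∑ k, ∑ l, (J i k * J j l) * (J i k * J j l) = Fintype.card N ^ 2 := by
  simp [← Finset.mul_sum, sum_J_sq_row hJ, mul_mul_mul_comm, sq]

lemma sum_J14_J23_sq :
    ∑ i, ∑ j, ∑ k, ∑ l, (J i l * J j k) * (J i l * J j k) = Fintype.card N ^ 2 := by
  simp [← Finset.sum_mul, sum_J_sq_row hJ, mul_mul_mul_comm, sq]

lemma sum_J12_J34_mul_J13_J24 :
    ∑ i, ∑ j, ∑ k, ∑ l, (J i j * J k l) * (J i k * J j l) = Fintype.card N := by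
  calc ∑ i, ∑ j, ∑ k, ∑ l, (J i j * J k l) * (J i k * J j l)
      = ∑ i, ∑ j, ∑ k, (J i j * J i k) * ∑ l, J k l * J j l := by
        simp only [Finset.mul_sum]
        congr! 4
        ring
    _ = ∑ i, ∑ j, J i j * J i j := by simp only [hJ, sum_mul_kd]
    _ = Fintype.card N := by simp [sum_J_sq_row hJ]

lemma sum_J12_J34_mul_J14_J23 (hJa : ∀ i j, J j i = - J i j) :
    ∑ i, ∑ j, ∑ k, ∑ l, (J i j * J k l) * (J i l * J j k) = - Fintype.card N := by
  calc ∑ i, ∑ j, ∑ k, ∑ l, (J i j * J k l) * (J i l * J j k)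
      = ∑ i, ∑ j, ∑ k, (J i j * J j k) * ∑ l, J k l * J i l := by
        simp only [Finset.mul_sum]
        congr! 4
        ring
    _ = ∑ i : N, - kd i i := by simp only [hJ, sum_mul_kd, sum_J_mul_J hJ hJa]
    _ = - (Fintype.card N : ℝ) := by simp [kd]

lemma sum_J13_J24_mul_J14_J23 :
    ∑ i, ∑ j, ∑ k, ∑ l, (J i k * J j l) * (J i l * J j k) = Fintype.card N := by
  calc ∑ i, ∑ j, ∑ k, ∑ l, (J i k * J j l) * (J i l * J j k)
      = ∑ i, ∑ j, (∑ k, J i k * J j k) * ∑ l, J j l * J i l := by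
        simp only [Finset.mul_sum, Finset.sum_mul]
        congr! 4
        ring
    _ = Fintype.card N := by simp [hJ, kd]

lemma norm4sq_jTensor (hJa : ∀ i j, J j i = - J i j) :
    norm4sq (jTensor J) = 3 / 2 * (Fintype.card N ^ 2 + Fintype.card N) := by
  have hexp : ∀ i j k l, jTensor J i j k l * jTensor J i j k l
      = 4 * ((J i j * J k l) * (J i j * J k l)) + (J i k * J j l) * (J i k * J j l)
        + (J i l * J j k) * (J i l * J j k) + 4 * ((J i j * J k l) * (J i k * J j l))
        - 4 * ((J i j * J k l) * (J i l * J j k)) - 2 * ((J i k * J j l) * (J i l * J j k)) := by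
    intros; unfold jTensor; ring
  simp only [norm4sq, inner4, hexp, Finset.sum_add_distrib, Finset.sum_sub_distrib,
    ← Finset.mul_sum, sum_J12_J34_sq hJ, sum_J13_J24_sq hJ, sum_J14_J23_sq hJ,
    sum_J12_J34_mul_J13_J24 hJ, sum_J12_J34_mul_J14_J23 hJ hJa, sum_J13_J24_mul_J14_J23 hJ]
  ring

end Orthogonal

end CircleBundle

lemma norm4sq_Rb (m : ℕ) (K : Fin (2*m) → Fin (2*m) → Fin (2*m) → Fin (2*m) → ℝ)
    (J : Fin (2*m) → Fin (2*m) → ℝ) (τ : ℝ) :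
    norm4sq (Rb m K J τ)
      = norm4sq (fun i j k l => K i j k l - τ ^ 2 / 4 * jTensor J i j k l) + m * τ ^ 4 / 8 := by
  simp only [norm4sq, inner4, Fintype.sum_sum_type, Fintype.sum_unique, Rb, jTensor]
  simp [kd, Finset.sum_add_distrib]
  ring

lemma scal_eq_two_mul_lamK (m : ℕ) (K : Fin (2*m) → Fin (2*m) → Fin (2*m) → Fin (2*m) → ℝ) :
    scal K = 2 * m * lamK m K := by
  rcases eq_or_ne m 0 with rfl | hm
  · simp [scal]
  · unfold lamK
    field_simp

theorem stmt16_general (m : ℕ)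
    (K : Fin (2*m) → Fin (2*m) → Fin (2*m) → Fin (2*m) → ℝ)
    (J : Fin (2*m) → Fin (2*m) → ℝ) (τ : ℝ)
    (hK : IsKael m K J) :
    norm4sq (Rb m K J τ)
      = norm4sq K - (3/2) * (m : ℝ) * τ ^ 2 * lamK m K
        + ((6 * (m : ℝ) ^ 2 + 5 * (m : ℝ)) / 16) * τ ^ 4 := by
  obtain ⟨⟨-, hb, -, hbi⟩, hJa, hJ, hinv⟩ := hK
  rw [norm4sq_Rb, norm4sq_sub_mul, inner4_jTensor hb hbi hJa hinv, norm4sq_jTensor hJ hJa,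
    Fintype.card_fin, scal_eq_two_mul_lamK]
  push_cast
  ring

/-- The norm of the circle-bundle curvature operator:
`‖R‖² = ‖K‖² - (3/2) m τ² λ̄ + ((6m²+5m)/16) τ⁴`. -/
theorem stmt16 (m : ℕ) (hm : 1 ≤ m)
    (K : Fin (2*m) → Fin (2*m) → Fin (2*m) → Fin (2*m) → ℝ)
    (J : Fin (2*m) → Fin (2*m) → ℝ) (τ : ℝ) (hτ : 0 < τ)
    (hK : IsKael m K J) :
    norm4sq (Rb m K J τ)
      = norm4sq K - (3/2) * (m : ℝ) * τ ^ 2 * lamK m K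
        + ((6 * (m : ℝ) ^ 2 + 5 * (m : ℝ)) / 16) * τ ^ 4 :=
  stmt16_general m K J τ hK

end PaperStmt
end
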